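/- arXiv:1805.02362 — 7 statements merged into one kernel-verified Lean document; each statement's English description precedes it below -/
import Mathlib

section
/- The spectral radius of B equals (1 − q)^{−1/2}; moreover, writing α_n = √((1 − q^{n+1})/(1 − q)) for the weights of B, both r(B) = lim_{k→∞} sup_{n∈ℕ} (∏_{i=0}^{k−1} α_{n+i})^{1/k} and i(B) = lim_{k→∞} inf_{n∈ℕ} (∏_{i=0}^{k−1} α_{n+i})^{1/k} exist and are equal to (1 − q)^{−1/2}. -/
open Filter Topology

noncomputable section

abbrev H2 : Type := lp (fun _ : ℕ => ℂ) 2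

def Phi (n : ℕ) : H2 := lp.single 2 n 1

open Finset

/-!
`B` is a weighted shift whose weights `α n` increase to `c = (1 - q)^(-1/2)`. Hence `‖B‖ ≤ c`,
while `‖B^k Φ_n‖ = α n ⋯ α (n + k - 1) → c^k`, so `‖B^k‖ = c^k` for all `k ≥ 1` and Gelfand's
formula gives `r(B) = c`. By monotonicity of the weights, the supremum over `n` of the geometric
means of `k` consecutive weights is their limit `c`, and the infimum is the mean of the first `k`
weights, which tends to `c` by Cesàro's theorem applied to `log (α n)`.
-/

theorem spectralRadius_eq_of_norm_pow_eq {A : Type*} [NormedRing A] [NormedAlgebra ℂ A]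
    [CompleteSpace A] {a : A} {C : ℝ} (hC : 0 ≤ C) (h : ∀ k ≠ 0, ‖a ^ k‖ = C ^ k) :
    spectralRadius ℂ a = ENNReal.ofReal C :=
  tendsto_nhds_unique (spectrum.pow_norm_pow_one_div_tendsto_nhds_spectralRadius a) <|
    tendsto_const_nhds.congr' <| (eventually_ne_atTop 0).mono fun k hk => by
      dsimp only
      rw [h k hk, one_div, Real.pow_rpow_inv_natCast hC hk]

section WindowProducts

theorem tendsto_prod_range_add {M : Type*} [CommMonoid M] [TopologicalSpace M] [ContinuousMul M]
    {a : ℕ → M} {c : M} (ha : Tendsto a atTop (𝓝 c)) (k : ℕ) :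
    Tendsto (fun n => ∏ i ∈ range k, a (n + i)) atTop (𝓝 (c ^ k)) := by
  simpa using tendsto_finsetProd (range k) fun i _ => ha.comp (tendsto_add_atTop_nat i)

variable {a : ℕ → ℝ} {c : ℝ}

theorem monotone_rpow_prod_range_add (h0 : ∀ n, 0 ≤ a n) (hmono : Monotone a) (k : ℕ) :
    Monotone fun n => (∏ i ∈ range k, a (n + i)) ^ ((k : ℝ)⁻¹) := fun n m hnm =>
  Real.rpow_le_rpow (prod_nonneg fun i _ => h0 _)
    (prod_le_prod (fun i _ => h0 _) fun i _ => hmono (by omega)) (by positivity)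

theorem ciSup_rpow_prod_range_add (h0 : ∀ n, 0 ≤ a n) (hmono : Monotone a)
    (ha : Tendsto a atTop (𝓝 c)) {k : ℕ} (hk : k ≠ 0) :
    ⨆ n, (∏ i ∈ range k, a (n + i)) ^ ((k : ℝ)⁻¹) = c := by
  have hc : 0 ≤ c := ge_of_tendsto' ha h0
  have hlim : Tendsto (fun n => (∏ i ∈ range k, a (n + i)) ^ ((k : ℝ)⁻¹)) atTop (𝓝 c) := by
    simpa [Real.pow_rpow_inv_natCast hc hk] using
      (tendsto_prod_range_add ha k).rpow_const (p := (k : ℝ)⁻¹) (Or.inr (by positivity))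
  have hmono' := monotone_rpow_prod_range_add h0 hmono k
  exact tendsto_nhds_unique
    (tendsto_atTop_ciSup hmono' ⟨c, Set.forall_mem_range.2 (hmono'.ge_of_tendsto hlim)⟩) hlim

theorem ciInf_rpow_prod_range_add (h0 : ∀ n, 0 ≤ a n) (hmono : Monotone a) (k : ℕ) :
    ⨅ n, (∏ i ∈ range k, a (n + i)) ^ ((k : ℝ)⁻¹) = (∏ i ∈ range k, a i) ^ ((k : ℝ)⁻¹) := by
  set f := fun n => (∏ i ∈ range k, a (n + i)) ^ ((k : ℝ)⁻¹)
  have hmono' : Monotone f := monotone_rpow_prod_range_add h0 hmono k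
  have hbdd : BddBelow (Set.range f) := ⟨0, Set.forall_mem_range.2 fun n =>
    Real.rpow_nonneg (prod_nonneg fun i _ => h0 _) _⟩
  simpa [f] using le_antisymm (ciInf_le hbdd 0) (le_ciInf fun n => hmono' (Nat.zero_le n))

theorem tendsto_rpow_prod_range (hpos : ∀ n, 0 < a n) (hc : 0 < c) (ha : Tendsto a atTop (𝓝 c)) :
    Tendsto (fun k : ℕ => (∏ i ∈ range k, a i) ^ ((k : ℝ)⁻¹)) atTop (𝓝 c) := by
  have hlog : Tendsto (fun i => Real.log (a i)) atTop (𝓝 (Real.log c)) :=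
    (Real.continuousAt_log hc.ne').tendsto.comp ha
  have hexp := (Real.continuous_exp.tendsto _).comp hlog.cesaro
  rw [Real.exp_log hc] at hexp
  refine hexp.congr fun k => ?_
  rw [Function.comp_apply, ← Real.log_prod fun i _ => (hpos i).ne',
    Real.rpow_def_of_pos (prod_pos fun i _ => hpos i), mul_comm]

end WindowProducts

theorem norm_Phi (n : ℕ) : ‖Phi n‖ = 1 := by
  rw [Phi, lp.norm_single (by norm_num), norm_one]

theorem lp_single_eq_smul_Phi (n : ℕ) (z : ℂ) : lp.single 2 n z = z • Phi n := by
  rw [Phi, ← lp.single_smul, smul_eq_mul, mul_one]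

theorem hasSum_sq_norm_H2 (x : H2) : HasSum (fun n => ‖x n‖ ^ 2) (‖x‖ ^ 2) := by
  simpa only [ENNReal.toReal_ofNat, Real.rpow_two] using lp.hasSum_norm (p := 2) (by norm_num) x

section WeightedShift

variable {α : ℕ → ℂ} {B : H2 →L[ℂ] H2}

theorem weightedShift_pow_apply_Phi (hB : ∀ n, B (Phi n) = α n • Phi (n + 1)) (k n : ℕ) :
    (B ^ k) (Phi n) = (∏ i ∈ range k, α (n + i)) • Phi (n + k) := by
  induction k generalizing n with
  | zero => simp
  | succ k ih =>
    rw [pow_succ, mul_apply_eq_comp, hB, map_smul, ih, smul_smul,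
      prod_range_succ', add_zero, add_right_comm n 1 k, add_assoc n k 1]
    simp only [add_assoc, add_comm 1, mul_comm]

theorem hasSum_weightedShift_apply (hB : ∀ n, B (Phi n) = α n • Phi (n + 1)) (x : H2) :
    HasSum (fun n => (α n * x n) • Phi (n + 1)) (B x) := by
  refine (B.hasSum (lp.hasSum_single (by norm_num) x)).congr_fun fun n => ?_
  rw [lp_single_eq_smul_Phi, map_smul, hB, smul_smul, mul_comm]

theorem hasSum_weightedShift_apply_apply (hB : ∀ n, B (Phi n) = α n • Phi (n + 1)) (x : H2) (m : ℕ) :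
    HasSum (fun n => α n * x n * Phi (n + 1) m) (B x m) :=
  (hasSum_weightedShift_apply hB x).map (lp.evalₗ (𝕜 := ℂ) (fun _ : ℕ => ℂ) 2 m)
    (lp.evalCLM ℂ (fun _ : ℕ => ℂ) 2 m).continuous

theorem weightedShift_apply_zero (hB : ∀ n, B (Phi n) = α n • Phi (n + 1)) (x : H2) :
    B x 0 = 0 :=
  (hasSum_weightedShift_apply_apply hB x 0).unique (by simp [Phi, hasSum_zero])

theorem weightedShift_apply_succ (hB : ∀ n, B (Phi n) = α n • Phi (n + 1)) (x : H2) (n : ℕ) :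
    B x (n + 1) = α n * x n := by
  refine (hasSum_weightedShift_apply_apply hB x (n + 1)).unique ?_
  convert hasSum_single n fun m hm => ?_ using 1
  · simp [Phi]
  · simp [Phi, hm.symm]

theorem norm_weightedShift_le {C : ℝ} (hB : ∀ n, B (Phi n) = α n • Phi (n + 1))
    (hα : ∀ n, ‖α n‖ ≤ C) : ‖B‖ ≤ C := by
  have hC : 0 ≤ C := (norm_nonneg _).trans (hα 0)
  refine B.opNorm_le_bound hC fun x => ?_
  have hBx : HasSum (fun n => ‖B x (n + 1)‖ ^ 2) (‖B x‖ ^ 2) := by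
    simpa [weightedShift_apply_zero hB] using (hasSum_nat_add_iff' 1).2 (hasSum_sq_norm_H2 (B x))
  have hsq : ‖B x‖ ^ 2 ≤ (C * ‖x‖) ^ 2 := by
    rw [mul_pow]
    refine hasSum_le (fun n => ?_) hBx ((hasSum_sq_norm_H2 x).mul_left (C ^ 2))
    rw [weightedShift_apply_succ hB, norm_mul, mul_pow]
    gcongr
    exact hα n
  exact (pow_le_pow_iff_left₀ (norm_nonneg _) (by positivity) two_ne_zero).1 hsq

theorem norm_weightedShift_pow {C : ℝ} (hB : ∀ n, B (Phi n) = α n • Phi (n + 1))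
    (hα : ∀ n, ‖α n‖ ≤ C) (hlim : Tendsto (fun n => ‖α n‖) atTop (𝓝 C)) {k : ℕ} (hk : k ≠ 0) :
    ‖B ^ k‖ = C ^ k := by
  refine le_antisymm ?_ (le_of_tendsto (tendsto_prod_range_add hlim k) (.of_forall fun n => ?_))
  · calc ‖B ^ k‖ ≤ ‖B‖ ^ k := norm_pow_le' B (Nat.pos_of_ne_zero hk)
      _ ≤ C ^ k := pow_le_pow_left₀ (norm_nonneg _) (norm_weightedShift_le hB hα) k
  · calc ∏ i ∈ range k, ‖α (n + i)‖ = ‖(B ^ k) (Phi n)‖ := by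
          rw [weightedShift_pow_apply_Phi hB, norm_smul, norm_Phi, mul_one, norm_prod]
      _ ≤ ‖B ^ k‖ := (B ^ k).unit_le_opNorm _ (norm_Phi n).le

end WeightedShift

def shiftWeight (q : ℝ) (n : ℕ) : ℝ := √((1 - q ^ (n + 1)) / (1 - q))

section ShiftWeight

variable {q : ℝ} (hq0 : 0 ≤ q) (hq1 : q < 1)
include hq0 hq1

theorem shiftWeight_pos (n : ℕ) : 0 < shiftWeight q n := by
  have : q ^ (n + 1) < 1 := pow_lt_one₀ hq0 hq1 n.succ_ne_zero
  exact Real.sqrt_pos.2 (div_pos (by linarith) (by linarith))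

theorem shiftWeight_monotone : Monotone (shiftWeight q) := fun n m hnm => by
  have : q ^ (m + 1) ≤ q ^ (n + 1) := pow_le_pow_of_le_one hq0 hq1.le (by omega)
  exact Real.sqrt_le_sqrt (div_le_div_of_nonneg_right (by linarith) (by linarith))

theorem tendsto_shiftWeight :
    Tendsto (shiftWeight q) atTop (𝓝 ((1 - q) ^ (-(1 / 2 : ℝ)))) := by
  have hpow : Tendsto (fun n : ℕ => q ^ (n + 1)) atTop (𝓝 0) :=
    (tendsto_pow_atTop_nhds_zero_of_lt_one hq0 hq1).comp (tendsto_add_atTop_nat 1)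
  have := ((tendsto_const_nhds (x := (1 : ℝ)).sub hpow).div_const (1 - q)).sqrt
  rwa [sub_zero, one_div, Real.sqrt_inv, Real.sqrt_eq_rpow, ← Real.rpow_neg (by linarith)] at this

end ShiftWeight

/-- The spectral radius of `B` equals `(1−q)^{-1/2}`; moreover, with weights
`α_n = √((1−q^{n+1})/(1−q))`, the quantities
`r(B) = lim_k sup_n (∏_{i<k} α_{n+i})^{1/k}` and
`i(B) = lim_k inf_n (∏_{i<k} α_{n+i})^{1/k}` exist and equal `(1−q)^{-1/2}`. -/
theorem stmt_8 (q : ℝ) (hq0 : 0 < q) (hq1 : q < 1)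
    (B : H2 →L[ℂ] H2)
    (hB : ∀ n : ℕ, B (Phi n) = (Real.sqrt ((1 - q ^ (n + 1)) / (1 - q)) : ℂ) • Phi (n + 1)) :
    spectralRadius ℂ B = ENNReal.ofReal ((1 - q) ^ (-(1 / 2 : ℝ))) ∧
    Tendsto
      (fun k : ℕ => ⨆ n : ℕ,
        (∏ i ∈ Finset.range k, Real.sqrt ((1 - q ^ (n + i + 1)) / (1 - q))) ^ ((k : ℝ)⁻¹))
      atTop (𝓝 ((1 - q) ^ (-(1 / 2 : ℝ)))) ∧
    Tendsto
      (fun k : ℕ => ⨅ n : ℕ,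
        (∏ i ∈ Finset.range k, Real.sqrt ((1 - q ^ (n + i + 1)) / (1 - q))) ^ ((k : ℝ)⁻¹))
      atTop (𝓝 ((1 - q) ^ (-(1 / 2 : ℝ)))) := by
  have hpos := shiftWeight_pos hq0.le hq1
  have hmono := shiftWeight_monotone hq0.le hq1
  have hlim := tendsto_shiftWeight hq0.le hq1
  have hC : 0 < (1 - q) ^ (-(1 / 2 : ℝ)) := Real.rpow_pos_of_pos (by linarith) _
  refine ⟨spectralRadius_eq_of_norm_pow_eq hC.le fun k hk => ?_, ?_, ?_⟩
  · have hnorm : (fun n => ‖(shiftWeight q n : ℂ)‖) = shiftWeight q :=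
      funext fun n => Complex.norm_of_nonneg (hpos n).le
    exact norm_weightedShift_pow hB
      (fun n => (congrFun hnorm n).le.trans (hmono.ge_of_tendsto hlim n)) (hnorm ▸ hlim) hk
  · exact tendsto_const_nhds.congr' <| (eventually_ne_atTop 0).mono fun k hk =>
      (ciSup_rpow_prod_range_add (fun n => (hpos n).le) hmono hlim hk).symm
  · refine (tendsto_rpow_prod_range hpos hC hlim).congr fun k => ?_
    exact (ciInf_rpow_prod_range_add (fun n => (hpos n).le) hmono k).symm

end
end

section
/- The spectrum of B is the closed disk {c ∈ ℂ : |c| ≤ (1 − q)^{−1/2}} centered at the origin in the complex plane. -/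
/-! The weights `w n = √((1 - q ^ (n + 1)) / (1 - q))` increase to `L = (1 - q) ^ (-1/2)`, so
`‖B‖ ≤ L` and the spectrum lies in the closed disk of radius `L`. Conversely, for `‖c‖ < L` the
sequence `v n = conj (c ^ n / ∏_{k<n} w k)` is in `ℓ²` by the ratio test and `B† v = conj c • v`;
hence the range of `c - B` is orthogonal to `v ≠ 0`, and `c` is in the spectrum. The spectrum is
closed, so it contains the closed disk. -/

noncomputable section

open Filter Topology Metric

theorem Phi_apply (n m : ℕ) : Phi n m = if m = n then 1 else 0 := by
  simp [Phi, lp.single_apply, Pi.single_apply]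

theorem Phi_ne_zero (n : ℕ) : Phi n ≠ 0 := fun h => by
  simpa [Phi_apply] using congr($h n)

instance : Nontrivial H2 := ⟨⟨Phi 0, 0, Phi_ne_zero 0⟩⟩

theorem continuousLinearMap_ext_Phi {F : Type*} [AddCommMonoid F] [Module ℂ F]
    [TopologicalSpace F] [T2Space F] {S T : H2 →L[ℂ] F} (h : ∀ n, S (Phi n) = T (Phi n)) :
    S = T :=
  lp.ext_continuousLinearMap ENNReal.ofNat_ne_top fun n => ContinuousLinearMap.ext_ring (h n)

theorem mem_spectrum_of_inner_apply_eq {𝕜 E : Type*} [RCLike 𝕜] [NormedAddCommGroup E]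
    [InnerProductSpace 𝕜 E] {T : E →L[𝕜] E} {c : 𝕜} {v : E} (hv : v ≠ 0)
    (h : ∀ x, inner 𝕜 v (T x) = c * inner 𝕜 v x) : c ∈ spectrum 𝕜 T := by
  intro hunit
  obtain ⟨S, hS⟩ := hunit.exists_right_inv
  have hSv : c • S v - T (S v) = v := by
    simpa [Algebra.algebraMap_eq_smul_one] using congr($hS v)
  apply hv
  rw [← inner_self_eq_zero (𝕜 := 𝕜)]
  nth_rw 2 [← hSv]
  rw [inner_sub_right, inner_smul_right, h, sub_self]

namespace WeightedShift

variable {w : ℕ → ℂ}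

def eigenseq (w : ℕ → ℂ) (c : ℂ) (n : ℕ) : ℂ := c ^ n / ∏ k ∈ Finset.range n, w k

theorem eigenseq_zero (w : ℕ → ℂ) (c : ℂ) : eigenseq w c 0 = 1 := by
  simp [eigenseq]

theorem eigenseq_succ (w : ℕ → ℂ) (c : ℂ) (n : ℕ) :
    eigenseq w c (n + 1) = c * eigenseq w c n / w n := by
  simp only [eigenseq, Finset.prod_range_succ, pow_succ]
  ring

theorem summable_norm_eigenseq {L : ℝ} (hwL : Tendsto (‖w ·‖) atTop (𝓝 L)) {c : ℂ}
    (hc : ‖c‖ < L) : Summable (‖eigenseq w c ·‖) := by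
  obtain ⟨ρ, hcρ, hρL⟩ := exists_between hc
  have hρ : 0 < ρ := (norm_nonneg c).trans_lt hcρ
  refine summable_of_ratio_norm_eventually_le (r := ‖c‖ / ρ) ((div_lt_one hρ).2 hcρ) ?_
  filter_upwards [hwL.eventually (lt_mem_nhds hρL)] with n hn
  rw [norm_norm, norm_norm, eigenseq_succ, norm_div, norm_mul, div_mul_eq_mul_div]
  exact div_le_div_of_nonneg_left (by positivity) hρ hn.le

variable {B : H2 →L[ℂ] H2} (hB : ∀ n, B (Phi n) = w n • Phi (n + 1))
include hB

theorem apply_zero (f : H2) : B f 0 = 0 := by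
  have : (lp.evalCLM ℂ _ 2 0).comp B = 0 :=
    continuousLinearMap_ext_Phi fun n => by simp [lp.evalCLM, hB, Phi_apply]
  exact congr($this f)

theorem apply_succ (f : H2) (k : ℕ) : B f (k + 1) = w k * f k := by
  have : (lp.evalCLM ℂ _ 2 (k + 1)).comp B = w k • lp.evalCLM ℂ _ 2 k :=
    continuousLinearMap_ext_Phi fun n => by
      by_cases hkn : k = n <;> simp [lp.evalCLM, hB, Phi_apply, hkn]
  exact congr($this f)

theorem norm_apply_le {r : ℝ} (hw : ∀ n, ‖w n‖ ≤ r) (f : H2) : ‖B f‖ ≤ r * ‖f‖ := by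
  have hr : 0 ≤ r := (norm_nonneg _).trans (hw 0)
  have hBf := lp.hasSum_norm (p := 2) (by norm_num) (B f)
  have hf := lp.hasSum_norm (p := 2) (by norm_num) f
  simp only [ENNReal.toReal_ofNat, Real.rpow_two] at hBf hf
  have hBf' : HasSum (fun k => ‖w k‖ ^ 2 * ‖f k‖ ^ 2) (‖B f‖ ^ 2) := by
    simpa [apply_zero hB, apply_succ hB, mul_pow] using (hasSum_nat_add_iff' 1).2 hBf
  have : ‖B f‖ ^ 2 ≤ (r * ‖f‖) ^ 2 := by
    rw [mul_pow]
    exact hasSum_le (fun k => by gcongr; exact hw k) hBf' (hf.mul_left (r ^ 2))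
  exact (pow_le_pow_iff_left₀ (norm_nonneg _) (by positivity) two_ne_zero).1 this

theorem spectrum_subset_closedBall {r : ℝ} (hw : ∀ n, ‖w n‖ ≤ r) :
    spectrum ℂ B ⊆ closedBall 0 r :=
  (spectrum.subset_closedBall_norm B).trans <| closedBall_subset_closedBall <|
    B.opNorm_le_bound ((norm_nonneg _).trans (hw 0)) (norm_apply_le hB hw)

theorem ball_subset_spectrum (hw : ∀ n, w n ≠ 0) {L : ℝ} (hwL : Tendsto (‖w ·‖) atTop (𝓝 L)) :
    ball 0 L ⊆ spectrum ℂ B := by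
  intro c hc
  rw [mem_ball_zero_iff] at hc
  have hv : Memℓp (fun n => star (eigenseq w c n)) 2 := by
    refine Memℓp.of_exponent_ge (memℓp_gen ?_) one_le_two
    simpa using summable_norm_eigenseq hwL hc
  set v : H2 := ⟨_, hv⟩
  have hv0 : v ≠ 0 := fun h => by simpa [v, eigenseq_zero] using congr($h 0)
  have hBv : (innerSL ℂ v).comp B = c • innerSL ℂ v :=
    continuousLinearMap_ext_Phi fun n => by
      simp only [ContinuousLinearMap.comp_apply, hB]
      simp [v, Phi, lp.inner_single_right, eigenseq_succ, mul_div_cancel₀ _ (hw n)]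
  exact mem_spectrum_of_inner_apply_eq hv0 fun x => congr($hBv x)

theorem spectrum_eq_closedBall (hw : ∀ n, w n ≠ 0) {L : ℝ} (hw_le : ∀ n, ‖w n‖ ≤ L)
    (hwL : Tendsto (‖w ·‖) atTop (𝓝 L)) : spectrum ℂ B = closedBall 0 L := by
  have hL : 0 < L := (norm_pos_iff.2 (hw 0)).trans_le (hw_le 0)
  refine (spectrum_subset_closedBall hB hw_le).antisymm ?_
  rw [← closure_ball 0 hL.ne']
  exact closure_minimal (ball_subset_spectrum hB hw hwL) (spectrum.isClosed B)

end WeightedShift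

theorem Real.rpow_neg_half {x : ℝ} (hx : 0 ≤ x) : x ^ (-(1 / 2 : ℝ)) = √x⁻¹ := by
  rw [Real.rpow_neg hx, ← Real.sqrt_eq_rpow, Real.sqrt_inv]

section QIntegers

-- `(1 - q ^ (n + 1)) / (1 - q)` is the `q`-integer `[n + 1]_q`.

variable {q : ℝ} (hq0 : 0 ≤ q) (hq1 : q < 1)
include hq0 hq1

theorem sqrt_qInt_pos (n : ℕ) : 0 < √((1 - q ^ (n + 1)) / (1 - q)) := by
  have : q ^ (n + 1) < 1 := pow_lt_one₀ hq0 hq1 n.succ_ne_zero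
  exact Real.sqrt_pos.2 (div_pos (by linarith) (by linarith))

theorem sqrt_qInt_le (n : ℕ) : √((1 - q ^ (n + 1)) / (1 - q)) ≤ √(1 - q)⁻¹ := by
  rw [inv_eq_one_div]
  gcongr
  linarith [pow_nonneg hq0 (n + 1)]

theorem tendsto_sqrt_qInt :
    Tendsto (fun n : ℕ => √((1 - q ^ (n + 1)) / (1 - q))) atTop (𝓝 √(1 - q)⁻¹) := by
  have hq : Tendsto (fun n : ℕ => q ^ (n + 1)) atTop (𝓝 0) :=
    (tendsto_pow_atTop_nhds_zero_of_lt_one hq0 hq1).comp (tendsto_add_atTop_nat 1)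
  have := ((tendsto_const_nhds (x := (1 : ℝ)).sub hq).div_const (1 - q)).sqrt
  rwa [sub_zero, one_div] at this

end QIntegers

/-- The spectrum of `B` is the closed disk of radius `(1−q)^{-1/2}` centered at the
origin. -/
theorem stmt_9 (q : ℝ) (hq0 : 0 < q) (hq1 : q < 1)
    (B : H2 →L[ℂ] H2)
    (hB : ∀ n : ℕ, B (Phi n) = (Real.sqrt ((1 - q ^ (n + 1)) / (1 - q)) : ℂ) • Phi (n + 1)) :
    spectrum ℂ B = {c : ℂ | ‖c‖ ≤ (1 - q) ^ (-(1 / 2 : ℝ))} := by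
  have hnorm (n : ℕ) :
      ‖(√((1 - q ^ (n + 1)) / (1 - q)) : ℂ)‖ = √((1 - q ^ (n + 1)) / (1 - q)) :=
    Complex.norm_of_nonneg (Real.sqrt_nonneg _)
  have hspec := WeightedShift.spectrum_eq_closedBall hB
    (fun n => Complex.ofReal_ne_zero.2 (sqrt_qInt_pos hq0.le hq1 n).ne')
    (fun n => (hnorm n).trans_le (sqrt_qInt_le hq0.le hq1 n))
    (by simpa only [hnorm] using tendsto_sqrt_qInt hq0.le hq1)
  rw [hspec, Real.rpow_neg_half (by linarith)]
  ext c
  simp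

end
end

section
/- The approximate point spectrum of B is the circle of radius (1 − q)^{−1/2} centered at the origin: for a complex number c, the operator B − c·I fails to be bounded below (i.e., there is no ε > 0 such that ‖(B − c·I)x‖ ≥ ε‖x‖ for all x ∈ H) if and only if |c| = (1 − q)^{−1/2}. -/
/-!
`B` is the weighted shift with weights `w n = √((1 - q^(n+1)) / (1 - q))`, which increase to
`r = (1 - q)^(-1/2)`, and `∏_{k<n} w k / r = √(∏_{k<n} (1 - q^(k+1)))` stays above a positive
constant `δ`. So `‖B‖ ≤ r`, which settles `‖c‖ > r`. For `‖c‖ < r`, the diagonal operator with entries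
`r^n / (w 0 ⋯ w (n-1)) ∈ [1, δ⁻¹]` conjugates `B` to `r` times the isometric shift `S`, and
`r S - c` is bounded below by `r - ‖c‖`. For `‖c‖ = r`, the formal eigenvector
`a n = ∏_{k<n} w k / c` has `‖a n‖ ≥ δ`, so its truncations `x N` satisfy `‖(B - c) x N‖ ≤ 2 r`
while `‖x N‖ ≥ δ √N`.
-/

noncomputable section

open Filter Finset

namespace ContinuousLinearMap

variable {𝕜 E F : Type*} [NontriviallyNormedField 𝕜] [NormedAddCommGroup E] [NormedSpace 𝕜 E]
  [NormedAddCommGroup F] [NormedSpace 𝕜 F]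

def IsBoundedBelow (A : E →L[𝕜] F) : Prop :=
  ∃ ε : ℝ, 0 < ε ∧ ∀ x, ε * ‖x‖ ≤ ‖A x‖

theorem isBoundedBelow_sub_smul_one_of_opNorm_lt {A : E →L[𝕜] E} {c : 𝕜} (h : ‖A‖ < ‖c‖) :
    (A - c • 1).IsBoundedBelow := by
  refine ⟨‖c‖ - ‖A‖, sub_pos.2 h, fun x => ?_⟩
  calc (‖c‖ - ‖A‖) * ‖x‖ = ‖c • x‖ - ‖A‖ * ‖x‖ := by rw [norm_smul]; ring
    _ ≤ ‖c • x‖ - ‖A x‖ := by gcongr; exact A.le_opNorm x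
    _ ≤ ‖A x - c • x‖ := by rw [norm_sub_rev]; exact norm_sub_norm_le _ _
    _ = ‖(A - c • 1) x‖ := by simp

theorem not_isBoundedBelow_of_tendsto {A : E →L[𝕜] F} {x : ℕ → E} {M : ℝ}
    (hM : ∀ N, ‖A (x N)‖ ≤ M) (hx : Tendsto (fun N => ‖x N‖) atTop atTop) :
    ¬ A.IsBoundedBelow := by
  rintro ⟨ε, hε, hA⟩
  obtain ⟨N, hN⟩ := (hx.eventually_gt_atTop (M / ε)).exists
  rw [div_lt_iff₀ hε] at hN
  linarith [hA (x N), hM N]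

end ContinuousLinearMap

namespace lp

variable {E : Type*} [NormedAddCommGroup E] {p : ENNReal}

theorem norm_le_of_forall_norm_le_succ (hp : 0 < p.toReal) {u v : lp (fun _ : ℕ => E) p}
    (h : ∀ n, ‖u n‖ ≤ ‖v (n + 1)‖) : ‖u‖ ≤ ‖v‖ := by
  refine norm_le_of_forall_sum_le hp (norm_nonneg' _) fun s => ?_
  calc ∑ n ∈ s, ‖u n‖ ^ p.toReal ≤ ∑ n ∈ s, ‖v (n + 1)‖ ^ p.toReal := by
        gcongr with n; exact h n
    _ = ∑ n ∈ s.map (addRightEmbedding 1), ‖v n‖ ^ p.toReal := by rw [Finset.sum_map]; rfl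
    _ ≤ ‖v‖ ^ p.toReal := sum_rpow_le_norm_rpow hp v _

theorem norm_le_of_apply_zero_of_forall_norm_succ_le (hp : 0 < p.toReal)
    {u v : lp (fun _ : ℕ => E) p} (h0 : v 0 = 0) (h : ∀ n, ‖v (n + 1)‖ ≤ ‖u n‖) : ‖v‖ ≤ ‖u‖ := by
  have hv := (lp.memℓp v).summable hp
  rw [← Real.rpow_le_rpow_iff (norm_nonneg' _) (norm_nonneg' _) hp, norm_rpow_eq_tsum hp,
    norm_rpow_eq_tsum hp, hv.tsum_eq_zero_add, h0, _root_.norm_zero, Real.zero_rpow hp.ne', zero_add]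
  refine ((summable_nat_add_iff 1).2 hv).tsum_le_tsum (fun n => ?_) ((lp.memℓp u).summable hp)
  gcongr
  exact h n

end lp

theorem Real.exp_neg_div_one_sub_le_one_sub {t : ℝ} (ht : t < 1) :
    Real.exp (-(t / (1 - t))) ≤ 1 - t := by
  have h : 0 < 1 - t := by linarith
  rw [← Real.le_log_iff_exp_le h]
  calc -(t / (1 - t)) = 1 - (1 - t)⁻¹ := by field_simp; ring
    _ ≤ Real.log (1 - t) := Real.one_sub_inv_le_log_of_pos h

theorem Real.exp_le_prod_one_sub_pow {q : ℝ} (hq0 : 0 ≤ q) (hq1 : q < 1) (n : ℕ) :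
    Real.exp (-(q / (1 - q) ^ 2)) ≤ ∏ k ∈ range n, (1 - q ^ (k + 1)) := by
  have h1q : 0 < 1 - q := by linarith
  have hpow : ∀ k : ℕ, q ^ (k + 1) ≤ q := fun k => pow_le_of_le_one hq0 hq1.le k.succ_ne_zero
  have hgeom : ∑ k ∈ range n, q ^ (k + 1) ≤ q / (1 - q) := by
    have hsum : (∑ k ∈ range n, q ^ (k + 1)) * (1 - q) = q * (1 - q ^ n) := by
      have := geom_sum_mul q n
      simp_rw [pow_succ']
      rw [← mul_sum]
      linear_combination (-q) * this
    rw [le_div_iff₀ h1q, hsum]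
    nlinarith [pow_nonneg hq0 n]
  calc Real.exp (-(q / (1 - q) ^ 2)) ≤ Real.exp (∑ k ∈ range n, -(q ^ (k + 1) / (1 - q))) := by
        gcongr
        rw [sum_neg_distrib, ← sum_div, neg_le_neg_iff, pow_two, ← div_div]
        gcongr
    _ = ∏ k ∈ range n, Real.exp (-(q ^ (k + 1) / (1 - q))) := Real.exp_sum _ _
    _ ≤ ∏ k ∈ range n, Real.exp (-(q ^ (k + 1) / (1 - q ^ (k + 1)))) := by
        gcongr with k
        exact hpow k
    _ ≤ ∏ k ∈ range n, (1 - q ^ (k + 1)) := by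
        gcongr with k
        exact Real.exp_neg_div_one_sub_le_one_sub ((hpow k).trans_lt hq1)

theorem prod_norm_div_le_one {w : ℕ → ℂ} {r : ℝ} (hw : ∀ n, ‖w n‖ ≤ r) (n : ℕ) :
    ∏ k ∈ range n, ‖w k‖ / r ≤ 1 := by
  have hr : 0 ≤ r := (norm_nonneg _).trans (hw 0)
  exact prod_le_one (fun k _ => div_nonneg (norm_nonneg _) hr) fun k _ =>
    div_le_one_of_le₀ (hw k) hr

def IsWeightedShift (T : H2 →L[ℂ] H2) (w : ℕ → ℂ) : Prop :=
  ∀ n, T (Phi n) = w n • Phi (n + 1)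

namespace IsWeightedShift

open ContinuousLinearMap

section

variable {T : H2 →L[ℂ] H2} {w : ℕ → ℂ} (hT : IsWeightedShift T w)
include hT

theorem apply_single (n : ℕ) (a : ℂ) : T (lp.single 2 n a) = lp.single 2 (n + 1) (w n * a) := by
  have h : lp.single 2 n a = a • Phi n := by rw [Phi, ← lp.single_smul, smul_eq_mul, mul_one]
  rw [h, map_smul, hT n, Phi, smul_smul, ← lp.single_smul, smul_eq_mul, mul_one, mul_comm]

theorem apply_zero (x : H2) : T x 0 = 0 := by
  have h := lp.ext_continuousLinearMap (𝕜 := ℂ) (by norm_num)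
    (f := lp.evalCLM ℂ (fun _ : ℕ => ℂ) 2 0 ∘L T) (g := 0) fun i => by
      ext
      simp [lp.evalCLM, hT.apply_single, lp.single_apply]
  exact congr($h x)

theorem apply_succ (x : H2) (n : ℕ) : T x (n + 1) = w n * x n := by
  have h := lp.ext_continuousLinearMap (𝕜 := ℂ) (by norm_num)
    (f := lp.evalCLM ℂ (fun _ : ℕ => ℂ) 2 (n + 1) ∘L T)
    (g := w n • lp.evalCLM ℂ (fun _ : ℕ => ℂ) 2 n) fun i => by
      ext
      obtain rfl | hi := eq_or_ne i n <;>
        simp [*, lp.evalCLM, hT.apply_single, lp.single_apply]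
  exact congr($h x)

theorem opNorm_le {r : ℝ} (hw : ∀ n, ‖w n‖ ≤ r) : ‖T‖ ≤ r := by
  have hr : 0 ≤ r := (norm_nonneg _).trans (hw 0)
  refine opNorm_le_bound _ hr fun x => ?_
  calc ‖T x‖ ≤ ‖(r : ℂ) • x‖ :=
        lp.norm_le_of_apply_zero_of_forall_norm_succ_le (by norm_num) (hT.apply_zero x) fun n => by
          rw [hT.apply_succ, lp.coeFn_smul, Pi.smul_apply, norm_mul, norm_smul, Complex.norm_real,
            Real.norm_of_nonneg hr]
          gcongr
          exact hw n
    _ = r * ‖x‖ := by rw [norm_smul, Complex.norm_real, Real.norm_of_nonneg hr]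

theorem sub_smul_one_apply_sum_single {c : ℂ} {a : ℕ → ℂ} (ha : ∀ n, c * a (n + 1) = w n * a n)
    (N : ℕ) : (T - c • 1) (∑ n ∈ range N, lp.single 2 n (a n)) =
      lp.single 2 N (c * a N) - lp.single 2 0 (c * a 0) := by
  have hstep : ∀ n, (T - c • 1) (lp.single 2 n (a n)) =
      lp.single 2 (n + 1) (c * a (n + 1)) - lp.single 2 n (c * a n) := fun n => by
    rw [sub_apply, smul_apply, one_apply_eq_self, hT.apply_single, ha, ← lp.single_smul,
      smul_eq_mul]
  simp only [map_sum, hstep]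
  exact sum_range_sub (fun n => lp.single 2 n (c * a n)) N

-- `diag d` conjugates `T` to `r` times the isometric shift
theorem isBoundedBelow_sub_smul_one_of_scaling {d : ℕ → ℂ} {K r : ℝ} (hd_ge : ∀ n, 1 ≤ ‖d n‖)
    (hd_le : ∀ n, ‖d n‖ ≤ K) (hd_succ : ∀ n, d (n + 1) * w n = r * d n) {c : ℂ} (hc : ‖c‖ < r) :
    (T - c • 1).IsBoundedBelow := by
  have hr : 0 < r := (norm_nonneg c).trans_lt hc
  have hK : 0 < K := zero_lt_one.trans_le ((hd_ge 0).trans (hd_le 0))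
  have hd_mul : ∀ (v : H2) n, ‖d n * v n‖ ≤ ‖((K : ℂ) • v) n‖ := fun v n => by
    rw [lp.coeFn_smul, Pi.smul_apply, norm_mul, norm_smul, Complex.norm_real,
      Real.norm_of_nonneg hK.le]
    gcongr
    exact hd_le n
  refine ⟨(r - ‖c‖) / K, by have := sub_pos.2 hc; positivity, fun x => ?_⟩
  set y := (T - c • 1) x
  let u : H2 := ⟨fun n => d n * x n, (lp.memℓp _).mono' (hd_mul x)⟩
  let z : H2 := ⟨fun n => d n * y n, (lp.memℓp _).mono' (hd_mul y)⟩
  have hxu : ‖x‖ ≤ ‖u‖ := lp.norm_mono two_ne_zero fun n => by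
    show ‖x n‖ ≤ ‖d n * x n‖
    rw [norm_mul]
    exact le_mul_of_one_le_left (norm_nonneg _) (hd_ge n)
  have hzy : ‖z‖ ≤ K * ‖y‖ := (lp.norm_mono two_ne_zero (hd_mul y)).trans_eq <| by
    rw [norm_smul, Complex.norm_real, Real.norm_of_nonneg hK.le]
  have hshift : ‖(r : ℂ) • u‖ ≤ ‖z + c • u‖ :=
    lp.norm_le_of_forall_norm_le_succ (by norm_num) fun n => by
      have hy : y (n + 1) = w n * x n - c * x (n + 1) := by
        rw [← hT.apply_succ]
        rfl
      refine le_of_eq (congrArg norm ?_)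
      show (r : ℂ) * (d n * x n) = d (n + 1) * y (n + 1) + c * (d (n + 1) * x (n + 1))
      rw [hy]
      linear_combination (x n) * (hd_succ n).symm
  have hzu : (r - ‖c‖) * ‖u‖ ≤ ‖z‖ := by
    have := hshift.trans (norm_add_le z (c • u))
    rw [norm_smul, norm_smul, Complex.norm_real, Real.norm_of_nonneg hr.le] at this
    linarith
  calc (r - ‖c‖) / K * ‖x‖ = (r - ‖c‖) * ‖x‖ / K := by ring
    _ ≤ ‖z‖ / K := by
        gcongr
        exact (mul_le_mul_of_nonneg_left hxu (sub_nonneg.2 hc.le)).trans hzu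
    _ ≤ ‖y‖ := (div_le_iff₀ hK).2 (by linarith)

end

section

variable {T : H2 →L[ℂ] H2} {w : ℕ → ℂ} (hT : IsWeightedShift T w) {r δ : ℝ}
  (hw : ∀ n, ‖w n‖ ≤ r) (hδ0 : 0 < δ) (hδ : ∀ n, δ ≤ ∏ k ∈ range n, ‖w k‖ / r)
include hT hw hδ0 hδ

theorem isBoundedBelow_sub_smul_one_of_norm_lt {c : ℂ} (hc : ‖c‖ < r) :
    (T - c • 1).IsBoundedBelow := by
  have hr : 0 < r := (norm_nonneg c).trans_lt hc
  have hw0 : ∀ n, w n ≠ 0 := fun n hn => by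
    have := hδ (n + 1)
    rw [prod_range_succ, hn, norm_zero, zero_div, mul_zero] at this
    linarith
  set d : ℕ → ℂ := fun n => ∏ k ∈ range n, ((r : ℂ) / w k) with hd
  have hd_norm : ∀ n, ‖d n‖ = (∏ k ∈ range n, ‖w k‖ / r)⁻¹ := fun n => by
    simp only [hd, norm_prod, norm_div, Complex.norm_real, Real.norm_of_nonneg hr.le,
      ← prod_inv_distrib, inv_div]
  refine hT.isBoundedBelow_sub_smul_one_of_scaling (d := d) (K := δ⁻¹) (fun n => ?_) (fun n => ?_)
    (fun n => ?_) hc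
  · rw [hd_norm]
    exact one_le_inv_iff₀.2 ⟨hδ0.trans_le (hδ n), prod_norm_div_le_one hw n⟩
  · rw [hd_norm]
    exact inv_anti₀ hδ0 (hδ n)
  · simp only [hd, prod_range_succ]
    field_simp [hw0 n]

theorem not_isBoundedBelow_sub_smul_one_of_norm_eq {c : ℂ} (hc : ‖c‖ = r) :
    ¬ (T - c • 1).IsBoundedBelow := by
  have hr : 0 < r := by
    have h1 := hδ 1
    rw [prod_range_one] at h1
    refine lt_of_le_of_ne ((norm_nonneg _).trans (hw 0)) fun h => ?_
    rw [← h, div_zero] at h1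
    linarith
  have hc0 : c ≠ 0 := norm_pos_iff.1 (hc ▸ hr)
  set a : ℕ → ℂ := fun n => ∏ k ∈ range n, (w k / c) with ha
  have ha_succ : ∀ n, c * a (n + 1) = w n * a n := fun n => by
    simp only [ha, prod_range_succ]
    field_simp
  have ha_norm : ∀ n, ‖a n‖ = ∏ k ∈ range n, ‖w k‖ / r := fun n => by
    simp only [ha, norm_prod, norm_div, hc]
  let x : ℕ → H2 := fun N => ∑ n ∈ range N, lp.single 2 n (a n)
  have ha_le : ∀ n, ‖a n‖ ≤ 1 := fun n => (ha_norm n).trans_le (prod_norm_div_le_one hw n)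
  have hx_sq : ∀ N : ℕ, (N : ℝ) * δ ^ 2 ≤ ‖x N‖ ^ 2 := fun N => by
    have h := lp.norm_sum_single (E := fun _ : ℕ => ℂ) (p := 2) (by norm_num) a (range N)
    simp only [ENNReal.toReal_ofNat, Real.rpow_two] at h
    rw [h]
    calc (N : ℝ) * δ ^ 2 = ∑ n ∈ range N, δ ^ 2 := by simp
      _ ≤ ∑ n ∈ range N, ‖a n‖ ^ 2 := by
          gcongr with n
          exact ha_norm n ▸ hδ n
  refine not_isBoundedBelow_of_tendsto (M := 2 * r) (x := x) (fun N => ?_) ?_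
  · calc ‖(T - c • 1) (x N)‖ ≤ ‖c * a N‖ + ‖c * a 0‖ := by
          rw [hT.sub_smul_one_apply_sum_single ha_succ]
          refine (norm_sub_le _ _).trans_eq ?_
          rw [lp.norm_single (by norm_num), lp.norm_single (by norm_num)]
      _ ≤ r * 1 + r * 1 := by
          rw [norm_mul, norm_mul, hc]
          gcongr <;> apply ha_le
      _ = 2 * r := by ring
  · refine tendsto_atTop_mono (fun N => Real.sqrt_le_iff.2 ⟨norm_nonneg _, hx_sq N⟩) ?_
    exact Real.tendsto_sqrt_atTop.comp
      (tendsto_natCast_atTop_atTop.atTop_mul_const (by positivity))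

theorem not_isBoundedBelow_sub_smul_one_iff (c : ℂ) :
    ¬ (T - c • 1).IsBoundedBelow ↔ ‖c‖ = r := by
  refine ⟨fun h => ?_, hT.not_isBoundedBelow_sub_smul_one_of_norm_eq hw hδ0 hδ⟩
  by_contra hne
  rcases lt_or_gt_of_ne hne with hlt | hgt
  · exact h (hT.isBoundedBelow_sub_smul_one_of_norm_lt hw hδ0 hδ hlt)
  · exact h (isBoundedBelow_sub_smul_one_of_opNorm_lt ((hT.opNorm_le hw).trans_lt hgt))

end

end IsWeightedShift

def qShiftWeight (q : ℝ) (n : ℕ) : ℝ := √((1 - q ^ (n + 1)) / (1 - q))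

theorem qShiftWeight_nonneg (q : ℝ) (n : ℕ) : 0 ≤ qShiftWeight q n := Real.sqrt_nonneg _

theorem qShiftWeight_mul_sqrt {q : ℝ} (hq1 : q < 1) (n : ℕ) :
    qShiftWeight q n * √(1 - q) = √(1 - q ^ (n + 1)) := by
  have h : 0 < √(1 - q) := Real.sqrt_pos.2 (by linarith)
  rw [qShiftWeight, Real.sqrt_div' _ (by linarith), div_mul_cancel₀ _ h.ne']

theorem qShiftWeight_le {q : ℝ} (hq0 : 0 ≤ q) (hq1 : q < 1) (n : ℕ) :
    qShiftWeight q n ≤ (√(1 - q))⁻¹ := by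
  have h : 0 < √(1 - q) := Real.sqrt_pos.2 (by linarith)
  calc qShiftWeight q n = √(1 - q ^ (n + 1)) * (√(1 - q))⁻¹ := by
        rw [← qShiftWeight_mul_sqrt hq1, mul_inv_cancel_right₀ h.ne']
    _ ≤ 1 * (√(1 - q))⁻¹ := by
        gcongr
        exact Real.sqrt_le_one.2 (sub_le_self _ (pow_nonneg hq0 _))
    _ = (√(1 - q))⁻¹ := one_mul _

theorem sqrt_exp_le_prod_qShiftWeight {q : ℝ} (hq0 : 0 ≤ q) (hq1 : q < 1) (n : ℕ) :
    √(Real.exp (-(q / (1 - q) ^ 2))) ≤ ∏ k ∈ range n, qShiftWeight q k / (√(1 - q))⁻¹ := by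
  simp_rw [div_inv_eq_mul, qShiftWeight_mul_sqrt hq1]
  rw [← Real.sqrt_prod _ fun k _ => sub_nonneg.2 (pow_le_one₀ hq0 hq1.le)]
  exact Real.sqrt_le_sqrt (Real.exp_le_prod_one_sub_pow hq0 hq1 n)

/-- The approximate point spectrum of `B` is the circle of radius `(1−q)^{-1/2}`:
`B − c·I` fails to be bounded below iff `|c| = (1−q)^{-1/2}`. -/
theorem stmt_11 (q : ℝ) (hq0 : 0 < q) (hq1 : q < 1)
    (B : H2 →L[ℂ] H2)
    (hB : ∀ n : ℕ, B (Phi n) = (Real.sqrt ((1 - q ^ (n + 1)) / (1 - q)) : ℂ) • Phi (n + 1)) :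
    ∀ c : ℂ,
      (¬ ∃ ε : ℝ, 0 < ε ∧ ∀ x : H2, ε * ‖x‖ ≤ ‖(B - c • (1 : H2 →L[ℂ] H2)) x‖) ↔
        ‖c‖ = (1 - q) ^ (-(1 / 2 : ℝ)) := by
  have hB' : IsWeightedShift B fun n => (qShiftWeight q n : ℂ) := hB
  have hnorm : ∀ n, ‖(qShiftWeight q n : ℂ)‖ = qShiftWeight q n := fun n =>
    by rw [Complex.norm_real, Real.norm_of_nonneg (qShiftWeight_nonneg q n)]
  rw [Real.rpow_neg (by linarith), ← Real.sqrt_eq_rpow]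
  exact hB'.not_isBoundedBelow_sub_smul_one_iff (r := (√(1 - q))⁻¹)
    (fun n => (hnorm n).trans_le (qShiftWeight_le hq0.le hq1 n))
    (Real.sqrt_pos.2 (Real.exp_pos _))
    (fun n => by simpa only [hnorm] using sqrt_exp_le_prod_qShiftWeight hq0.le hq1 n)

end
end

section
/- The spectrum of A is the closed disk {c ∈ ℂ : |c| ≤ (1 − q)^{−1/2}}, and the point spectrum of A is its interior: a complex number c is an eigenvalue of A (i.e., A x = c x for some nonzero x ∈ H) if and only if |c| < (1 − q)^{−1/2}. -/
/-!
`A` is the weighted backward shift `(A x)ₙ = wₙ x₍ₙ₊₁₎` with weights `wₙ = √[n+1]_q`, which are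
positive, bounded by `R = (1 - q)^{-1/2}` and converge to `R`; in particular `‖A‖ ≤ R`.
For `|c| < R` the eigenvalue equation `wₙ x₍ₙ₊₁₎ = c xₙ` is solved by the recursion
`x₍ₙ₊₁₎ = (c / wₙ) xₙ`, whose ratios are eventually below some `t < 1`, so the solution is
square-summable. For `|c| ≥ R` the same equation forces `|xₙ|` to be nondecreasing, which is
impossible in `ℓ²` unless `x = 0`. The spectrum is closed, contains the open disk of eigenvalues
and lies in the closed disk of radius `‖A‖ ≤ R`, so it is that closed disk.
-/

noncomputable section

open Filter Topology Metric

section Spectrum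

variable {𝕜 : Type*} [RCLike 𝕜]

theorem ContinuousLinearMap.mem_spectrum_of_apply_eq_smul {E : Type*} [NormedAddCommGroup E]
    [NormedSpace 𝕜 E] [CompleteSpace E] {T : E →L[𝕜] E} {c : 𝕜} {x : E} (hx : x ≠ 0)
    (hTx : T x = c • x) : c ∈ spectrum 𝕜 T := by
  rw [ContinuousLinearMap.spectrum_eq]
  exact Module.End.hasEigenvalue_of_hasEigenvector
    ⟨Module.End.mem_eigenspace_iff.mpr hTx, hx⟩ |>.mem_spectrum

theorem spectrum_eq_closedBall_of_ball_subset {A : Type*} [NormedRing A] [NormedAlgebra 𝕜 A]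
    [CompleteSpace A] [NormOneClass A] {a : A} {R : ℝ} (hR : 0 < R)
    (hball : ball 0 R ⊆ spectrum 𝕜 a) (hnorm : ‖a‖ ≤ R) :
    spectrum 𝕜 a = closedBall 0 R := by
  refine subset_antisymm (fun c hc => ?_) ?_
  · exact mem_closedBall_zero_iff.mpr ((spectrum.norm_le_norm_of_mem hc).trans hnorm)
  · rw [← closure_ball 0 hR.ne']
    exact (spectrum.isClosed a).closure_subset_iff.mpr hball

end Spectrum

-- Needed for `NormOneClass (H2 →L[ℂ] H2)`, hence for `‖c‖ ≤ ‖T‖` on the spectrum.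
instance inst_s12 : Nontrivial H2 :=
  ⟨Phi 0, 0, fun h => by simpa [Phi, lp.norm_single] using congrArg norm h⟩

theorem lp_single_eq_smul_Phi_s12 (k : ℕ) (a : ℂ) : lp.single 2 k a = a • Phi k := by
  rw [Phi, ← lp.single_smul, smul_eq_mul, mul_one]

def IsWeightedBackwardShift (T : H2 →L[ℂ] H2) (w : ℕ → ℂ) : Prop :=
  ∀ x n, T x n = w n * x (n + 1)

theorem isWeightedBackwardShift_of_apply_Phi {T : H2 →L[ℂ] H2} {w : ℕ → ℂ}
    (h0 : T (Phi 0) = 0) (hsucc : ∀ n, T (Phi (n + 1)) = w n • Phi n) :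
    IsWeightedBackwardShift T w := by
  intro x n
  have hPhi : ∀ k, T (Phi k) n = if k = n + 1 then w n else 0 := by
    rintro (_ | m)
    · simp [h0]
    · rw [hsucc]
      rcases eq_or_ne m n with rfl | hmn
      · simp [Phi]
      · simp [Phi, hmn, hmn.symm]
  have hterm : ∀ k, (lp.evalCLM ℂ _ 2 n ∘L T) (lp.single 2 k (x k)) =
      if k = n + 1 then w n * x (n + 1) else 0 := by
    intro k
    simp only [ContinuousLinearMap.comp_apply, lp.evalCLM, LinearMap.mkContinuous_apply,
      lp.evalₗ_apply, lp_single_eq_smul_Phi_s12, map_smul, hPhi]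
    split_ifs with hk
    · rw [hk, smul_eq_mul, mul_comm]
    · exact smul_zero _
  have hsum := (lp.hasSum_single ENNReal.ofNat_ne_top x).mapL (lp.evalCLM ℂ _ 2 n ∘L T)
  simp only [hterm] at hsum
  exact hsum.unique (hasSum_ite_eq _ _)

def eigenSeq (w : ℕ → ℂ) (c : ℂ) : ℕ → ℂ
  | 0 => 1
  | n + 1 => c / w n * eigenSeq w c n

theorem memℓp_eigenSeq {w : ℕ → ℂ} {c : ℂ} {R : ℝ} (hw : ∀ n, w n ≠ 0)
    (hlim : Tendsto (fun n => ‖w n‖) atTop (𝓝 R)) (hc : ‖c‖ < R) :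
    Memℓp (eigenSeq w c) 2 := by
  have hR : 0 < R := (norm_nonneg c).trans_lt hc
  obtain ⟨t, hct, ht1⟩ := exists_between ((div_lt_one hR).mpr hc)
  have ht0 : 0 ≤ t := (div_nonneg (norm_nonneg c) hR.le).trans hct.le
  have hev : ∀ᶠ n in atTop, ‖c‖ < t * ‖w n‖ :=
    (hlim.const_mul t).eventually_const_lt ((div_lt_iff₀ hR).mp hct)
  have hratio : ∀ᶠ n in atTop, ‖eigenSeq w c (n + 1)‖ ≤ t * ‖eigenSeq w c n‖ := by
    filter_upwards [hev] with n hn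
    rw [eigenSeq, norm_mul, norm_div]
    gcongr
    exact (div_le_iff₀ (norm_pos_iff.mpr (hw n))).mpr hn.le
  refine memℓp_gen ?_
  have hsq : Summable fun n => ‖eigenSeq w c n‖ ^ 2 :=
    summable_of_ratio_norm_eventually_le (pow_lt_one₀ ht0 ht1 two_ne_zero) <| by
      filter_upwards [hratio] with n hn
      simp only [norm_pow, norm_norm, ← mul_pow]
      gcongr
  simpa using hsq

namespace IsWeightedBackwardShift

variable {T : H2 →L[ℂ] H2} {w : ℕ → ℂ} {R : ℝ}

theorem opNorm_le (hT : IsWeightedBackwardShift T w) {C : ℝ} (hC : 0 ≤ C)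
    (hw : ∀ n, ‖w n‖ ≤ C) : ‖T‖ ≤ C := by
  refine T.opNorm_le_bound hC fun x => lp.norm_le_of_forall_sum_le (by norm_num)
    (by positivity) fun s => ?_
  have h2 : (2 : ENNReal).toReal = 2 := by norm_num
  rw [h2]
  calc ∑ n ∈ s, ‖T x n‖ ^ (2 : ℝ)
      ≤ ∑ n ∈ s, C ^ (2 : ℝ) * ‖x (n + 1)‖ ^ (2 : ℝ) := by
        gcongr with n
        rw [hT x n, norm_mul, Real.mul_rpow (norm_nonneg _) (norm_nonneg _)]
        gcongr
        exact hw n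
    _ = C ^ (2 : ℝ) * ∑ n ∈ s.map (addRightEmbedding 1), ‖x n‖ ^ (2 : ℝ) := by
        rw [Finset.sum_map, Finset.mul_sum]
        rfl
    _ ≤ C ^ (2 : ℝ) * ‖x‖ ^ (2 : ℝ) := by
        gcongr
        have hsum := lp.sum_rpow_le_norm_rpow (by norm_num) x (s.map (addRightEmbedding 1))
        rwa [h2] at hsum
    _ = (C * ‖x‖) ^ (2 : ℝ) := (Real.mul_rpow hC (norm_nonneg _)).symm

theorem apply_eq_smul_iff (hT : IsWeightedBackwardShift T w) {x : H2} {c : ℂ} :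
    T x = c • x ↔ ∀ n, w n * x (n + 1) = c * x n := by
  simp only [lp.ext_iff, funext_iff, ← hT x, lp.coeFn_smul, Pi.smul_apply, smul_eq_mul]

theorem eq_zero_of_apply_eq_smul (hT : IsWeightedBackwardShift T w) {x : H2} {c : ℂ}
    (hc : c ≠ 0) (hw : ∀ n, ‖w n‖ ≤ ‖c‖) (hx : T x = c • x) : x = 0 := by
  have hrec := hT.apply_eq_smul_iff.mp hx
  -- `‖c‖ ‖xₙ‖ = ‖wₙ‖ ‖xₙ₊₁‖ ≤ ‖c‖ ‖xₙ₊₁‖`, while `‖xₙ‖² → 0`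
  have hmono : Monotone fun n => ‖x n‖ ^ (2 : ℝ) := by
    refine monotone_nat_of_le_succ fun n => ?_
    have hn := congrArg norm (hrec n)
    rw [norm_mul, norm_mul] at hn
    have hle : ‖x n‖ ≤ ‖x (n + 1)‖ := le_of_mul_le_mul_left
      (hn ▸ mul_le_mul_of_nonneg_right (hw n) (norm_nonneg _)) (norm_pos_iff.mpr hc)
    gcongr
  have hsum : Summable fun n => ‖x n‖ ^ (2 : ℝ) := by
    simpa using (lp.memℓp x).summable (by norm_num)
  ext n
  have hn := hmono.ge_of_tendsto hsum.tendsto_atTop_zero n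
  rw [Real.rpow_two] at hn
  simpa using hn

theorem exists_apply_eq_smul (hT : IsWeightedBackwardShift T w) {c : ℂ} (hw : ∀ n, w n ≠ 0)
    (hlim : Tendsto (fun n => ‖w n‖) atTop (𝓝 R)) (hc : ‖c‖ < R) :
    ∃ x : H2, x ≠ 0 ∧ T x = c • x := by
  refine ⟨⟨eigenSeq w c, memℓp_eigenSeq hw hlim hc⟩, fun h => ?_, ?_⟩
  · simpa [eigenSeq] using congrArg (fun x : H2 => x 0) h
  · refine hT.apply_eq_smul_iff.mpr fun n => ?_
    change w n * (c / w n * eigenSeq w c n) = c * eigenSeq w c n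
    field_simp [hw n]

theorem exists_apply_eq_smul_iff (hT : IsWeightedBackwardShift T w) (hw : ∀ n, w n ≠ 0)
    (hwR : ∀ n, ‖w n‖ ≤ R) (hlim : Tendsto (fun n => ‖w n‖) atTop (𝓝 R)) (c : ℂ) :
    (∃ x : H2, x ≠ 0 ∧ T x = c • x) ↔ ‖c‖ < R := by
  refine ⟨fun ⟨x, hx, hTx⟩ => not_le.mp fun hRc => hx ?_, hT.exists_apply_eq_smul hw hlim⟩
  have hc : c ≠ 0 := norm_pos_iff.mp <| (norm_pos_iff.mpr (hw 0)).trans_le ((hwR 0).trans hRc)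
  exact hT.eq_zero_of_apply_eq_smul hc (fun n => (hwR n).trans hRc) hTx

theorem spectrum_eq (hT : IsWeightedBackwardShift T w) (hw : ∀ n, w n ≠ 0)
    (hwR : ∀ n, ‖w n‖ ≤ R) (hlim : Tendsto (fun n => ‖w n‖) atTop (𝓝 R)) :
    spectrum ℂ T = closedBall 0 R := by
  have hR : 0 < R := (norm_pos_iff.mpr (hw 0)).trans_le (hwR 0)
  refine spectrum_eq_closedBall_of_ball_subset hR (fun c hc => ?_) (hT.opNorm_le hR.le hwR)
  obtain ⟨x, hx, hTx⟩ := hT.exists_apply_eq_smul hw hlim (mem_ball_zero_iff.mp hc)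
  exact ContinuousLinearMap.mem_spectrum_of_apply_eq_smul hx hTx

end IsWeightedBackwardShift

def qNum (q : ℝ) (n : ℕ) : ℝ := (1 - q ^ n) / (1 - q)

section qNum

variable {q : ℝ}

theorem qNum_pos (hq0 : 0 ≤ q) (hq1 : q < 1) {n : ℕ} (hn : n ≠ 0) : 0 < qNum q n :=
  div_pos (sub_pos.mpr (pow_lt_one₀ hq0 hq1 hn)) (sub_pos.mpr hq1)

theorem qNum_le_inv (hq0 : 0 ≤ q) (hq1 : q < 1) (n : ℕ) : qNum q n ≤ (1 - q)⁻¹ := by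
  rw [qNum, div_eq_mul_inv]
  exact mul_le_of_le_one_left (inv_nonneg.mpr (sub_pos.mpr hq1).le)
    (sub_le_self _ (pow_nonneg hq0 n))

theorem tendsto_qNum (hq : |q| < 1) : Tendsto (qNum q) atTop (𝓝 (1 - q)⁻¹) := by
  have hpow := (tendsto_pow_atTop_nhds_zero_of_abs_lt_one hq).const_sub 1 |>.div_const (1 - q)
  rwa [sub_zero, one_div] at hpow

end qNum

/-- The spectrum of `A` is the closed disk of radius `(1−q)^{-1/2}`, and the point
spectrum of `A` is its interior: `c` is an eigenvalue of `A` iff `|c| < (1−q)^{-1/2}`. -/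
theorem stmt_12 (q : ℝ) (hq0 : 0 < q) (hq1 : q < 1)
    (A : H2 →L[ℂ] H2)
    (hA0 : A (Phi 0) = 0)
    (hA : ∀ n : ℕ, A (Phi (n + 1)) = (Real.sqrt ((1 - q ^ (n + 1)) / (1 - q)) : ℂ) • Phi n) :
    spectrum ℂ A = {c : ℂ | ‖c‖ ≤ (1 - q) ^ (-(1 / 2 : ℝ))} ∧
    ∀ c : ℂ, (∃ x : H2, x ≠ 0 ∧ A x = c • x) ↔ ‖c‖ < (1 - q) ^ (-(1 / 2 : ℝ)) := by
  set w : ℕ → ℂ := fun n => (√(qNum q (n + 1)) : ℂ)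
  have hT : IsWeightedBackwardShift A w := isWeightedBackwardShift_of_apply_Phi hA0 hA
  have hnorm : ∀ n, ‖w n‖ = √(qNum q (n + 1)) :=
    fun n => Complex.norm_of_nonneg (Real.sqrt_nonneg _)
  have hw : ∀ n, w n ≠ 0 := fun n => norm_pos_iff.mp <| (hnorm n).symm ▸
    Real.sqrt_pos.mpr (qNum_pos hq0.le hq1 n.succ_ne_zero)
  have hwR : ∀ n, ‖w n‖ ≤ √(1 - q)⁻¹ := fun n =>
    (hnorm n).symm ▸ Real.sqrt_le_sqrt (qNum_le_inv hq0.le hq1 _)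
  have hlim : Tendsto (fun n => ‖w n‖) atTop (𝓝 √(1 - q)⁻¹) := by
    simp_rw [hnorm]
    exact ((tendsto_qNum (abs_lt.mpr ⟨by linarith, hq1⟩)).comp (tendsto_add_atTop_nat 1)).sqrt
  have hR : (1 - q) ^ (-(1 / 2 : ℝ)) = √(1 - q)⁻¹ := by
    rw [Real.rpow_neg (sub_pos.mpr hq1).le, ← Real.sqrt_eq_rpow, Real.sqrt_inv]
  rw [hR, hT.spectrum_eq hw hwR hlim]
  exact ⟨by ext c; simp, hT.exists_apply_eq_smul_iff hw hwR hlim⟩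

end
end

section
/- In the Calkin algebra on H, the image π(B) is invertible and its inverse is (1 − q)·π(A). -/
/-!
The operators `(1 - q) • B * A - 1` and `(1 - q) • A * B - 1` are diagonal in the basis `Φ n`,
with eigenvalues `-q ^ n` and `-q ^ (n + 1)`. An operator on `ℓ^p` whose values on the standard
basis have summable norms is the norm limit of its finite-rank truncations, hence compact; so both
operators vanish in the Calkin algebra.
-/

noncomputable section

open scoped ENNReal
open Filter Topology

namespace lp

variable {𝕜 E : Type*} [RCLike 𝕜] [NormedAddCommGroup E] [NormedSpace 𝕜 E]
  {p : ℝ≥0∞} [Fact (1 ≤ p)]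

theorem isCompactOperator_smulRight_evalCLM (n : ℕ) (v : E) :
    IsCompactOperator ((evalCLM 𝕜 (fun _ : ℕ => 𝕜) p n).smulRight v) :=
  (isCompactOperator_of_locallyCompactSpace_rng
    (ContinuousLinearMap.toSpanSingleton 𝕜 v)).comp_clm (evalCLM 𝕜 (fun _ : ℕ => 𝕜) p n)

theorem hasSum_smul_apply_single (hp : p ≠ ∞) (T : lp (fun _ : ℕ => 𝕜) p →L[𝕜] E)
    (f : lp (fun _ : ℕ => 𝕜) p) : HasSum (fun n => f n • T (lp.single p n 1)) (T f) := by
  convert (lp.hasSum_single hp f).mapL T using 2 with n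
  rw [← map_smul, ← lp.single_smul, smul_eq_mul, mul_one]

theorem isCompactOperator_of_summable_norm_apply_single [CompleteSpace E] (hp : p ≠ ∞)
    (T : lp (fun _ : ℕ => 𝕜) p →L[𝕜] E) (hT : Summable fun n => ‖T (lp.single p n 1)‖) :
    IsCompactOperator T := by
  set F : ℕ → lp (fun _ : ℕ => 𝕜) p →L[𝕜] E := fun N =>
    ∑ n ∈ Finset.range N, (evalCLM 𝕜 (fun _ : ℕ => 𝕜) p n).smulRight (T (lp.single p n 1))
  have hF_compact (N : ℕ) : IsCompactOperator (F N) :=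
    (compactOperator _ _ _).sum_mem fun n _ => isCompactOperator_smulRight_evalCLM n _
  have hF_dist (N : ℕ) : ‖T - F N‖ ≤ ∑' k, ‖T (lp.single p (k + N) 1)‖ := by
    refine ContinuousLinearMap.opNorm_le_bound _ (tsum_nonneg fun _ => norm_nonneg _) fun f => ?_
    have htail : HasSum (fun k => f (k + N) • T (lp.single p (k + N) 1)) ((T - F N) f) := by
      convert (hasSum_nat_add_iff' N).2 (hasSum_smul_apply_single hp T f)
      simp only [F, sub_apply, FunLike.coe_sum, Finset.sum_apply,
        ContinuousLinearMap.smulRight_apply]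
      rfl
    refine htail.norm_le_of_bounded (((summable_nat_add_iff N).2 hT).hasSum.mul_right ‖f‖)
      fun k => ?_
    rw [norm_smul, mul_comm]
    exact mul_le_mul_of_nonneg_left
      (norm_apply_le_norm (zero_lt_one.trans_le Fact.out).ne' f _) (norm_nonneg _)
  have hF_tendsto : Tendsto F atTop (𝓝 T) := by
    rw [tendsto_iff_norm_sub_tendsto_zero]
    exact squeeze_zero (fun _ => norm_nonneg _) (fun N => (norm_sub_rev _ _).le.trans (hF_dist N))
      (tendsto_sum_nat_add fun n => ‖T (lp.single p n 1)‖)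
  exact isCompactOperator_of_tendsto hF_tendsto (Eventually.of_forall hF_compact)

end lp

theorem AlgHom.mul_eq_one_of_isCompactOperator_mul_sub_one {𝕜 E Q : Type*}
    [NontriviallyNormedField 𝕜] [NormedAddCommGroup E] [NormedSpace 𝕜 E] [Ring Q] [Algebra 𝕜 Q]
    (π : (E →L[𝕜] E) →ₐ[𝕜] Q) (hπ : ∀ T : E →L[𝕜] E, IsCompactOperator T → π T = 0)
    {S T : E →L[𝕜] E} (h : IsCompactOperator ⇑(S * T - 1)) : π S * π T = 1 := by
  rw [← map_mul, ← sub_eq_zero, ← map_one π, ← map_sub]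
  exact hπ _ h

theorem isCompactOperator_of_apply_Phi {T : H2 →L[ℂ] H2} {c : ℕ → ℂ}
    (hc : Summable fun n => ‖c n‖) (hT : ∀ n, T (Phi n) = c n • Phi n) : IsCompactOperator T :=
  lp.isCompactOperator_of_summable_norm_apply_single ENNReal.ofNat_ne_top T <|
    hc.congr fun n => by
      change ‖c n‖ = ‖T (Phi n)‖
      rw [hT n, norm_smul]
      simp [Phi]

theorem one_sub_mul_sqrt_mul_sqrt {q : ℝ} (hq0 : 0 ≤ q) (hq1 : q < 1) (n : ℕ) :
    ((1 : ℂ) - q) * ((Real.sqrt ((1 - q ^ (n + 1)) / (1 - q)) : ℂ) *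
      (Real.sqrt ((1 - q ^ (n + 1)) / (1 - q)) : ℂ)) = 1 - (q : ℂ) ^ (n + 1) := by
  have hq : (1 - q) ≠ 0 := by linarith
  have hnum : 0 ≤ (1 - q ^ (n + 1)) / (1 - q) :=
    div_nonneg (sub_nonneg.2 (pow_le_one₀ hq0 hq1.le)) (by linarith)
  rw [← Complex.ofReal_mul, Real.mul_self_sqrt hnum]
  push_cast
  field_simp [show (1 : ℂ) - q ≠ 0 by exact_mod_cast hq]

section Oscillator

variable {q : ℝ} {A B : H2 →L[ℂ] H2}

theorem mul_smul_sub_one_apply_Phi (hq0 : 0 ≤ q) (hq1 : q < 1)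
    (hB : ∀ n : ℕ, B (Phi n) = (Real.sqrt ((1 - q ^ (n + 1)) / (1 - q)) : ℂ) • Phi (n + 1))
    (hA0 : A (Phi 0) = 0)
    (hA : ∀ n : ℕ, A (Phi (n + 1)) = (Real.sqrt ((1 - q ^ (n + 1)) / (1 - q)) : ℂ) • Phi n)
    (n : ℕ) : (B * (((1 : ℂ) - q) • A) - 1) (Phi n) = (-(q : ℂ) ^ n) • Phi n := by
  cases n with
  | zero => simp [hA0]
  | succ n =>
    simp only [sub_apply, mul_apply_eq_comp, smul_apply, one_apply_eq_self, hA, map_smul, hB,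
      smul_smul]
    rw [mul_assoc, one_sub_mul_sqrt_mul_sqrt hq0 hq1 n]
    module

theorem smul_mul_sub_one_apply_Phi (hq0 : 0 ≤ q) (hq1 : q < 1)
    (hB : ∀ n : ℕ, B (Phi n) = (Real.sqrt ((1 - q ^ (n + 1)) / (1 - q)) : ℂ) • Phi (n + 1))
    (hA : ∀ n : ℕ, A (Phi (n + 1)) = (Real.sqrt ((1 - q ^ (n + 1)) / (1 - q)) : ℂ) • Phi n)
    (n : ℕ) : (((1 : ℂ) - q) • A * B - 1) (Phi n) = (-(q : ℂ) ^ (n + 1)) • Phi n := by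
  simp only [sub_apply, mul_apply_eq_comp, smul_apply, one_apply_eq_self, hA, map_smul, hB,
    smul_smul]
  rw [mul_left_comm, one_sub_mul_sqrt_mul_sqrt hq0 hq1 n]
  module

end Oscillator

/-- The Calkin algebra is modelled by any `ℂ`-algebra `Q` receiving a homomorphism `π` from
`B(H)` whose kernel is exactly the compact operators. -/
theorem stmt_14_general (q : ℝ) (hq0 : 0 < q) (hq1 : q < 1)
    (A B : H2 →L[ℂ] H2)
    (hB : ∀ n : ℕ, B (Phi n) = (Real.sqrt ((1 - q ^ (n + 1)) / (1 - q)) : ℂ) • Phi (n + 1))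
    (hA0 : A (Phi 0) = 0)
    (hA : ∀ n : ℕ, A (Phi (n + 1)) = (Real.sqrt ((1 - q ^ (n + 1)) / (1 - q)) : ℂ) • Phi n)
    (Q : Type) [Ring Q] [Algebra ℂ Q] (π : (H2 →L[ℂ] H2) →ₐ[ℂ] Q)
    (hπker : ∀ T : H2 →L[ℂ] H2, π T = 0 ↔ IsCompactOperator (⇑T)) :
    π B * (((1 : ℂ) - q) • π A) = 1 ∧ (((1 : ℂ) - q) • π A) * π B = 1 := by
  have hπ : ∀ T : H2 →L[ℂ] H2, IsCompactOperator T → π T = 0 := fun T => (hπker T).2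
  have hgeom : Summable fun n => ‖(-(q : ℂ) ^ n)‖ := by
    simpa [abs_of_pos hq0] using summable_geometric_of_lt_one hq0.le hq1
  rw [← map_smul]
  exact ⟨π.mul_eq_one_of_isCompactOperator_mul_sub_one hπ <| isCompactOperator_of_apply_Phi
      hgeom (mul_smul_sub_one_apply_Phi hq0.le hq1 hB hA0 hA),
    π.mul_eq_one_of_isCompactOperator_mul_sub_one hπ <| isCompactOperator_of_apply_Phi
      ((summable_nat_add_iff 1).2 hgeom) (smul_mul_sub_one_apply_Phi hq0.le hq1 hB hA)⟩

/-- In the Calkin algebra on `H` (realized as any unital `ℂ`-algebra quotient of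
`B(H)` by exactly the compact operators, via a surjective algebra homomorphism `π`
whose kernel consists precisely of the compact operators), the image `π(B)` is
invertible with inverse `(1 − q)·π(A)`. -/
theorem stmt_14 (q : ℝ) (hq0 : 0 < q) (hq1 : q < 1)
    (A B : H2 →L[ℂ] H2)
    (hB : ∀ n : ℕ, B (Phi n) = (Real.sqrt ((1 - q ^ (n + 1)) / (1 - q)) : ℂ) • Phi (n + 1))
    (hA0 : A (Phi 0) = 0)
    (hA : ∀ n : ℕ, A (Phi (n + 1)) = (Real.sqrt ((1 - q ^ (n + 1)) / (1 - q)) : ℂ) • Phi n)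
    (Q : Type) [Ring Q] [Algebra ℂ Q] (π : (H2 →L[ℂ] H2) →ₐ[ℂ] Q)
    (hπsurj : Function.Surjective π)
    (hπker : ∀ T : H2 →L[ℂ] H2, π T = 0 ↔ IsCompactOperator (⇑T)) :
    π B * (((1 : ℂ) - q) • π A) = 1 ∧ (((1 : ℂ) - q) • π A) * π B = 1 :=
  stmt_14_general q hq0 hq1 A B hB hA0 hA Q π hπker

end
end

section
/- 𝔏₀⁽²⁾(q) is a Lie ideal of ℋ(q): for every X ∈ 𝔏₀⁽²⁾(q) and every Y ∈ ℋ(q), the commutator [X,Y] = XY − YX belongs to 𝔏₀⁽²⁾(q). -/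
/-!
On the basis `Φ n` the commutator `C = [A, B]` acts diagonally by `q ^ n`, which gives the
relations `A C = q C A`, `C B = q B C` and `B A = (1 - q)⁻¹ (1 - C)`. With them, multiplying a
normally ordered monomial `C ^ k A ^ l` or `B ^ l C ^ k` (`k > 0`) by `A` or `B` on either side
yields a combination of such monomials, still with a positive power of `C`. So their span is a
two-sided ideal of `ℋ(q)`, a fortiori a Lie ideal.
-/

noncomputable section

section Semiring

variable {K R : Type*} [CommSemiring K] [Semiring R] [Algebra K R]

theorem mul_pow_eq_smul_pow_mul {x y : R} {q : K} (h : x * y = q • (y * x)) (k : ℕ) :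
    x * y ^ k = q ^ k • (y ^ k * x) := by
  induction k with
  | zero => simp
  | succ k ih =>
    rw [pow_succ, ← mul_assoc, ih, smul_mul_assoc, mul_assoc, h, mul_smul_comm, smul_smul,
      ← mul_assoc, ← pow_succ, ← pow_succ]

theorem pow_mul_eq_smul_mul_pow {x y : R} {q : K} (h : x * y = q • (y * x)) (k : ℕ) :
    x ^ k * y = q ^ k • (y * x ^ k) := by
  induction k with
  | zero => simp
  | succ k ih =>
    rw [pow_succ, mul_assoc, h, mul_smul_comm, ← mul_assoc, ih, smul_mul_assoc, smul_smul,
      mul_assoc, ← pow_succ']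

theorem mul_mem_of_mem_adjoin {s : Set R} {L : Submodule K R}
    (hs : ∀ a ∈ s, ∀ x ∈ L, a * x ∈ L) {x y : R} (hy : y ∈ Algebra.adjoin K s)
    (hx : x ∈ L) : y * x ∈ L := by
  induction hy using Algebra.adjoin_induction generalizing x with
  | mem a ha => exact hs a ha x hx
  | algebraMap r => simpa [Algebra.algebraMap_eq_smul_one] using L.smul_mem r hx
  | add y z _ _ ihy ihz => simpa only [add_mul] using add_mem (ihy hx) (ihz hx)
  | mul y z _ _ ihy ihz => simpa only [mul_assoc] using ihy (ihz hx)

theorem mul_mem_of_mem_adjoin' {s : Set R} {L : Submodule K R}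
    (hs : ∀ a ∈ s, ∀ x ∈ L, x * a ∈ L) {x y : R} (hy : y ∈ Algebra.adjoin K s)
    (hx : x ∈ L) : x * y ∈ L := by
  induction hy using Algebra.adjoin_induction generalizing x with
  | mem a ha => exact hs a ha x hx
  | algebraMap r => simpa [Algebra.algebraMap_eq_smul_one] using L.smul_mem r hx
  | add y z _ _ ihy ihz => simpa only [mul_add] using add_mem (ihy hx) (ihz hx)
  | mul y z _ _ ihy ihz => simpa only [mul_assoc] using ihz (ihy hx)

def commutatorMonomials (A B C : R) : Set R :=
  {T | ∃ k l : ℕ, 0 < k ∧ 0 < l ∧ (T = C ^ k ∨ T = C ^ k * A ^ l ∨ T = B ^ l * C ^ k)}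

variable (K) in
def commutatorSpan (A B C : R) : Submodule K R :=
  Submodule.span K (commutatorMonomials A B C)

section commutatorSpan

variable {A B C : R}

theorem pow_mul_pow_mem_commutatorSpan {k : ℕ} (hk : 0 < k) (l : ℕ) :
    C ^ k * A ^ l ∈ commutatorSpan K A B C := by
  rcases Nat.eq_zero_or_pos l with rfl | hl
  · exact Submodule.subset_span ⟨k, 1, hk, one_pos, Or.inl (by simp)⟩
  · exact Submodule.subset_span ⟨k, l, hk, hl, Or.inr (Or.inl rfl)⟩

theorem pow_mul_pow_mem_commutatorSpan' {k : ℕ} (hk : 0 < k) (l : ℕ) :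
    B ^ l * C ^ k ∈ commutatorSpan K A B C := by
  rcases Nat.eq_zero_or_pos l with rfl | hl
  · exact Submodule.subset_span ⟨k, 1, hk, one_pos, Or.inl (by simp)⟩
  · exact Submodule.subset_span ⟨k, l, hk, hl, Or.inr (Or.inr rfl)⟩

theorem commutatorSpan_le_comap (f : R →ₗ[K] R)
    (hA : ∀ k l : ℕ, 0 < k → f (C ^ k * A ^ l) ∈ commutatorSpan K A B C)
    (hB : ∀ k l : ℕ, 0 < k → f (B ^ l * C ^ k) ∈ commutatorSpan K A B C) :
    commutatorSpan K A B C ≤ (commutatorSpan K A B C).comap f := by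
  refine Submodule.span_le.mpr ?_
  rintro T ⟨k, l, hk, -, rfl | rfl | rfl⟩
  · simpa using hA k 0 hk
  · exact hA k l hk
  · exact hB k l hk

end commutatorSpan

end Semiring

theorem commute_pow_smul_one_sub {K R : Type*} [CommSemiring K] [Ring R] [Algebra K R]
    (C : R) (c : K) (k : ℕ) : Commute (C ^ k) (c • (1 - C)) :=
  (((Commute.one_right C).sub_right (Commute.refl C)).smul_right c).pow_left k

section Field

variable {K R : Type*} [Field K] [Ring R] [Algebra K R]

/-- With `c = (1 - q)⁻¹` these say `A * B - q • (B * A) = 1` and `C = A * B - B * A`. -/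
structure QOscillatorRelations (q c : K) (A B C : R) : Prop where
  q_ne_zero : q ≠ 0
  annihilation_mul_commutator : A * C = q • (C * A)
  commutator_mul_creation : C * B = q • (B * C)
  creation_mul_annihilation : B * A = c • (1 - C)
  annihilation_mul_creation : A * B = c • (1 - C) + C

namespace QOscillatorRelations

variable {q c : K} {A B C x : R}

theorem commutator_mul_annihilation (h : QOscillatorRelations q c A B C) :
    C * A = q⁻¹ • (A * C) := by
  rw [h.annihilation_mul_commutator, smul_smul, inv_mul_cancel₀ h.q_ne_zero, one_smul]

theorem creation_mul_commutator (h : QOscillatorRelations q c A B C) :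
    B * C = q⁻¹ • (C * B) := by
  rw [h.commutator_mul_creation, smul_smul, inv_mul_cancel₀ h.q_ne_zero, one_smul]

theorem commutator_mul_mem (h : QOscillatorRelations q c A B C)
    (hx : x ∈ commutatorSpan K A B C) : C * x ∈ commutatorSpan K A B C := by
  refine commutatorSpan_le_comap (LinearMap.mulLeft K C) (fun k l _ => ?_) (fun k l _ => ?_) hx
  · rw [LinearMap.mulLeft_apply, ← mul_assoc, ← pow_succ']
    exact pow_mul_pow_mem_commutatorSpan k.succ_pos l
  · rw [LinearMap.mulLeft_apply, ← mul_assoc,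
      mul_pow_eq_smul_pow_mul h.commutator_mul_creation, smul_mul_assoc, mul_assoc, ← pow_succ']
    exact Submodule.smul_mem _ _ (pow_mul_pow_mem_commutatorSpan' k.succ_pos l)

theorem mul_commutator_mem (h : QOscillatorRelations q c A B C)
    (hx : x ∈ commutatorSpan K A B C) : x * C ∈ commutatorSpan K A B C := by
  refine commutatorSpan_le_comap (LinearMap.mulRight K C) (fun k l _ => ?_) (fun k l _ => ?_) hx
  · rw [LinearMap.mulRight_apply, mul_assoc,
      pow_mul_eq_smul_mul_pow h.annihilation_mul_commutator, mul_smul_comm, ← mul_assoc,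
      ← pow_succ]
    exact Submodule.smul_mem _ _ (pow_mul_pow_mem_commutatorSpan k.succ_pos l)
  · rw [LinearMap.mulRight_apply, mul_assoc, ← pow_succ]
    exact pow_mul_pow_mem_commutatorSpan' k.succ_pos l

theorem smul_one_sub_mul_mem (h : QOscillatorRelations q c A B C)
    (hx : x ∈ commutatorSpan K A B C) : (c • (1 - C)) * x ∈ commutatorSpan K A B C := by
  rw [smul_mul_assoc, sub_mul, one_mul]
  exact Submodule.smul_mem _ _ (sub_mem hx (h.commutator_mul_mem hx))

theorem mul_smul_one_sub_mem (h : QOscillatorRelations q c A B C)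
    (hx : x ∈ commutatorSpan K A B C) : x * (c • (1 - C)) ∈ commutatorSpan K A B C := by
  rw [mul_smul_comm, mul_sub, mul_one]
  exact Submodule.smul_mem _ _ (sub_mem hx (h.mul_commutator_mem hx))

theorem annihilation_mul_mem (h : QOscillatorRelations q c A B C)
    (hx : x ∈ commutatorSpan K A B C) : A * x ∈ commutatorSpan K A B C := by
  have hCA : ∀ k l, 0 < k → A * (C ^ k * A ^ l) ∈ commutatorSpan K A B C := fun k l hk => by
    rw [← mul_assoc, mul_pow_eq_smul_pow_mul h.annihilation_mul_commutator, smul_mul_assoc,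
      mul_assoc, ← pow_succ']
    exact Submodule.smul_mem _ _ (pow_mul_pow_mem_commutatorSpan hk _)
  refine commutatorSpan_le_comap (LinearMap.mulLeft K A) hCA (fun k l hk => ?_) hx
  rw [LinearMap.mulLeft_apply]
  cases l with
  | zero => simpa using hCA k 0 hk
  | succ m =>
    rw [pow_succ', mul_assoc, ← mul_assoc, h.annihilation_mul_creation, add_mul]
    have hy : B ^ m * C ^ k ∈ commutatorSpan K A B C := pow_mul_pow_mem_commutatorSpan' hk m
    exact add_mem (h.smul_one_sub_mul_mem hy) (h.commutator_mul_mem hy)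

theorem mul_annihilation_mem (h : QOscillatorRelations q c A B C)
    (hx : x ∈ commutatorSpan K A B C) : x * A ∈ commutatorSpan K A B C := by
  have hCA : ∀ k l, 0 < k → C ^ k * A ^ l * A ∈ commutatorSpan K A B C := fun k l hk => by
    rw [mul_assoc, ← pow_succ]
    exact pow_mul_pow_mem_commutatorSpan hk _
  refine commutatorSpan_le_comap (LinearMap.mulRight K A) hCA (fun k l hk => ?_) hx
  rw [LinearMap.mulRight_apply]
  cases l with
  | zero => simpa using hCA k 0 hk
  | succ m =>
    have hy : B ^ m * C ^ k ∈ commutatorSpan K A B C := pow_mul_pow_mem_commutatorSpan' hk m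
    have key : B ^ (m + 1) * C ^ k * A = (q⁻¹) ^ k • (B ^ m * C ^ k * (c • (1 - C))) :=
      calc B ^ (m + 1) * C ^ k * A = (q⁻¹) ^ k • (B ^ m * (B * A) * C ^ k) := by
            rw [mul_assoc, pow_mul_eq_smul_mul_pow h.commutator_mul_annihilation, mul_smul_comm,
              pow_succ]
            simp only [mul_assoc]
        _ = (q⁻¹) ^ k • (B ^ m * C ^ k * (c • (1 - C))) := by
            rw [h.creation_mul_annihilation, mul_assoc, ← (commute_pow_smul_one_sub C c k).eq,
              mul_assoc]
    rw [key]
    exact Submodule.smul_mem _ _ (h.mul_smul_one_sub_mem hy)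

theorem creation_mul_mem (h : QOscillatorRelations q c A B C)
    (hx : x ∈ commutatorSpan K A B C) : B * x ∈ commutatorSpan K A B C := by
  have hBC : ∀ k l, 0 < k → B * (B ^ l * C ^ k) ∈ commutatorSpan K A B C := fun k l hk => by
    rw [← mul_assoc, ← pow_succ']
    exact pow_mul_pow_mem_commutatorSpan' hk _
  refine commutatorSpan_le_comap (LinearMap.mulLeft K B) (fun k l hk => ?_) hBC hx
  rw [LinearMap.mulLeft_apply]
  cases l with
  | zero => simpa using hBC k 0 hk
  | succ m =>
    have hy : C ^ k * A ^ m ∈ commutatorSpan K A B C := pow_mul_pow_mem_commutatorSpan hk m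
    have key : B * (C ^ k * A ^ (m + 1)) = (q⁻¹) ^ k • ((c • (1 - C)) * (C ^ k * A ^ m)) :=
      calc B * (C ^ k * A ^ (m + 1)) = (q⁻¹) ^ k • (C ^ k * (B * A) * A ^ m) := by
            rw [← mul_assoc, mul_pow_eq_smul_pow_mul h.creation_mul_commutator, smul_mul_assoc,
              pow_succ']
            simp only [mul_assoc]
        _ = (q⁻¹) ^ k • ((c • (1 - C)) * (C ^ k * A ^ m)) := by
            rw [h.creation_mul_annihilation, (commute_pow_smul_one_sub C c k).eq, mul_assoc]
    rw [key]
    exact Submodule.smul_mem _ _ (h.smul_one_sub_mul_mem hy)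

theorem mul_creation_mem (h : QOscillatorRelations q c A B C)
    (hx : x ∈ commutatorSpan K A B C) : x * B ∈ commutatorSpan K A B C := by
  have hBC : ∀ k l, 0 < k → B ^ l * C ^ k * B ∈ commutatorSpan K A B C := fun k l hk => by
    rw [mul_assoc, pow_mul_eq_smul_mul_pow h.commutator_mul_creation, mul_smul_comm,
      ← mul_assoc, ← pow_succ]
    exact Submodule.smul_mem _ _ (pow_mul_pow_mem_commutatorSpan' hk _)
  refine commutatorSpan_le_comap (LinearMap.mulRight K B) (fun k l hk => ?_) hBC hx
  rw [LinearMap.mulRight_apply]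
  cases l with
  | zero => simpa using hBC k 0 hk
  | succ m =>
    rw [pow_succ, ← mul_assoc, mul_assoc _ A B, h.annihilation_mul_creation, mul_add]
    have hy : C ^ k * A ^ m ∈ commutatorSpan K A B C := pow_mul_pow_mem_commutatorSpan hk m
    exact add_mem (h.mul_smul_one_sub_mem hy) (h.mul_commutator_mem hy)

theorem mul_sub_mul_mem (h : QOscillatorRelations q c A B C) {y : R}
    (hx : x ∈ commutatorSpan K A B C) (hy : y ∈ Algebra.adjoin K {A, B}) :
    x * y - y * x ∈ commutatorSpan K A B C := by
  refine sub_mem (mul_mem_of_mem_adjoin' ?_ hy hx) (mul_mem_of_mem_adjoin ?_ hy hx)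
  · rintro a (rfl | rfl) z hz
    exacts [h.mul_annihilation_mem hz, h.mul_creation_mem hz]
  · rintro a (rfl | rfl) z hz
    exacts [h.annihilation_mul_mem hz, h.creation_mul_mem hz]

end QOscillatorRelations

end Field

theorem ext_Phi {T S : H2 →L[ℂ] H2} (h : ∀ n, T (Phi n) = S (Phi n)) : T = S :=
  lp.ext_continuousLinearMap (by norm_num) fun n => ContinuousLinearMap.ext_ring (h n)

section WeightedShift

variable {A B : H2 →L[ℂ] H2} {w : ℕ → ℂ} {q : ℂ}

theorem creation_mul_annihilation_apply_Phi
    (hB : ∀ n, B (Phi n) = w n • Phi (n + 1)) (hA0 : A (Phi 0) = 0)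
    (hA : ∀ n, A (Phi (n + 1)) = w n • Phi n)
    (hw : ∀ n, w n * w n = (1 - q ^ (n + 1)) / (1 - q)) (n : ℕ) :
    (B * A) (Phi n) = ((1 - q ^ n) / (1 - q)) • Phi n := by
  cases n with
  | zero => simp [hA0]
  | succ n => simp only [mul_apply_eq_comp, hA, map_smul, hB, smul_smul, hw]

theorem annihilation_mul_creation_apply_Phi
    (hB : ∀ n, B (Phi n) = w n • Phi (n + 1)) (hA : ∀ n, A (Phi (n + 1)) = w n • Phi n)
    (hw : ∀ n, w n * w n = (1 - q ^ (n + 1)) / (1 - q)) (n : ℕ) :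
    (A * B) (Phi n) = ((1 - q ^ (n + 1)) / (1 - q)) • Phi n := by
  simp only [mul_apply_eq_comp, hA, map_smul, hB, smul_smul, hw]

theorem commutator_apply_Phi (hq : q ≠ 1)
    (hB : ∀ n, B (Phi n) = w n • Phi (n + 1)) (hA0 : A (Phi 0) = 0)
    (hA : ∀ n, A (Phi (n + 1)) = w n • Phi n)
    (hw : ∀ n, w n * w n = (1 - q ^ (n + 1)) / (1 - q)) (n : ℕ) :
    (A * B - B * A) (Phi n) = q ^ n • Phi n := by
  rw [sub_apply, annihilation_mul_creation_apply_Phi hB hA hw,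
    creation_mul_annihilation_apply_Phi hB hA0 hA hw, ← sub_smul]
  congr 1
  field_simp [sub_ne_zero.mpr hq.symm]
  ring

theorem qOscillatorRelations_of_weightedShift (hq0 : q ≠ 0) (hq1 : q ≠ 1)
    (hB : ∀ n, B (Phi n) = w n • Phi (n + 1)) (hA0 : A (Phi 0) = 0)
    (hA : ∀ n, A (Phi (n + 1)) = w n • Phi n)
    (hw : ∀ n, w n * w n = (1 - q ^ (n + 1)) / (1 - q)) :
    QOscillatorRelations q (1 - q)⁻¹ A B (A * B - B * A) := by
  have hC := commutator_apply_Phi hq1 hB hA0 hA hw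
  have hBA : B * A = (1 - q)⁻¹ • (1 - (A * B - B * A)) := ext_Phi fun n => by
    rw [creation_mul_annihilation_apply_Phi hB hA0 hA hw, smul_apply, sub_apply, hC,
      one_apply_eq_self, div_eq_inv_mul, ← smul_smul, sub_smul, one_smul]
  refine ⟨hq0, ext_Phi fun n => ?_, ext_Phi fun n => ?_, hBA, by rw [← hBA]; abel⟩
  · cases n with
    | zero => simp [hC, hA0]
    | succ n =>
      simp only [mul_apply_eq_comp, smul_apply, hC, hA, map_smul, smul_smul, pow_succ]
      ring_nf
  · simp only [mul_apply_eq_comp, smul_apply, hC, hB, map_smul, smul_smul, pow_succ]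
    ring_nf

end WeightedShift

/-- `𝔏₀⁽²⁾(q)` is a Lie ideal of `ℋ(q)`: for every `X ∈ 𝔏₀⁽²⁾(q)` and every
`Y ∈ ℋ(q)`, the commutator `XY − YX` belongs to `𝔏₀⁽²⁾(q)`. -/
theorem stmt_16 (q : ℝ) (hq0 : 0 < q) (hq1 : q < 1)
    (A B : H2 →L[ℂ] H2)
    (hB : ∀ n : ℕ, B (Phi n) = (Real.sqrt ((1 - q ^ (n + 1)) / (1 - q)) : ℂ) • Phi (n + 1))
    (hA0 : A (Phi 0) = 0)
    (hA : ∀ n : ℕ, A (Phi (n + 1)) = (Real.sqrt ((1 - q ^ (n + 1)) / (1 - q)) : ℂ) • Phi n) :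
    ∀ X ∈ Submodule.span ℂ {T : H2 →L[ℂ] H2 | ∃ k l : ℕ, 0 < k ∧ 0 < l ∧
        (T = (A * B - B * A) ^ k ∨ T = (A * B - B * A) ^ k * A ^ l ∨
          T = B ^ l * (A * B - B * A) ^ k)},
      ∀ Y ∈ Algebra.adjoin ℂ ({A, B} : Set (H2 →L[ℂ] H2)),
        X * Y - Y * X ∈ Submodule.span ℂ {T : H2 →L[ℂ] H2 | ∃ k l : ℕ, 0 < k ∧ 0 < l ∧
          (T = (A * B - B * A) ^ k ∨ T = (A * B - B * A) ^ k * A ^ l ∨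
            T = B ^ l * (A * B - B * A) ^ k)} := by
  have hw (n : ℕ) : ((Real.sqrt ((1 - q ^ (n + 1)) / (1 - q)) : ℝ) : ℂ) *
      ((Real.sqrt ((1 - q ^ (n + 1)) / (1 - q)) : ℝ) : ℂ) = (1 - (q : ℂ) ^ (n + 1)) / (1 - q) := by
    have : q ^ (n + 1) ≤ 1 := pow_le_one₀ hq0.le hq1.le
    rw [← Complex.ofReal_mul, Real.mul_self_sqrt (div_nonneg (by linarith) (by linarith))]
    norm_cast
  have h := qOscillatorRelations_of_weightedShift (Complex.ofReal_ne_zero.mpr hq0.ne')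
    (by exact_mod_cast hq1.ne) hB hA0 hA hw
  exact fun X hX Y hY => h.mul_sub_mul_mem hX hY
end
end

section
/- The Lie subalgebra of the bounded operators on H generated by {A, B} — i.e., the smallest complex linear subspace containing A and B and closed under the commutator bracket [X,Y] = XY − YX, whose elements are the Lie polynomials in A and B — is equal to the linear span of the set {A, B} ∪ {[A,B]^k, [A,B]^k A^l, B^l [A,B]^k : k, l positive integers}. -/
/-!
The operators satisfy the `q`-commutation relation `A B - q B A = 1`, so `C = [A, B]` equals
`1 - (1 - q) B A` and `A C = q C A`, `C B = q B C`. Hence the span of the normally ordered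
monomials `B^m C^k A^l` with `k ≥ 1` is a two-sided ideal of the algebra generated by `A` and
`B`, and adding `A` and `B` to it gives a Lie subalgebra. Conversely
`[C^k A^l, A] = (1 - q^k) C^k A^(l+1)`, `[B, B^m C^k] = (1 - q^k) B^(m+1) C^k`, and `C^(k+1)` is
a combination of `[C^k A, B]` and `C^k` with coefficient `1 - q^(k+1)`; as `q` is not a root of
unity, every listed operator is a Lie polynomial in `A` and `B`. Finally
`(1 - q) q^k B C^k A = C^k - C^(k+1)` rewrites every monomial `B^m C^k A^l` in terms of the
listed ones.
-/

noncomputable section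

attribute [local instance 100] LieRing.ofAssociativeRing

open Submodule

theorem lie_mem_span_of_forall_lie_mem {K L : Type*} [CommRing K] [LieRing L] [LieAlgebra K L]
    {s : Set L} (h : ∀ x ∈ s, ∀ y ∈ s, ⁅x, y⁆ ∈ span K s) {x y : L} (hx : x ∈ span K s)
    (hy : y ∈ span K s) : ⁅x, y⁆ ∈ span K s := by
  induction hx, hy using span_induction₂ with
  | mem_mem x y hx hy => exact h x hx y hy
  | zero_left => simp
  | zero_right => simp
  | add_left _ _ _ _ _ _ h₁ h₂ => rw [add_lie]; exact add_mem h₁ h₂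
  | add_right _ _ _ _ _ _ h₁ h₂ => rw [lie_add]; exact add_mem h₁ h₂
  | smul_left r _ _ _ _ h => rw [smul_lie]; exact smul_mem _ r h
  | smul_right r _ _ _ _ h => rw [lie_smul]; exact smul_mem _ r h

theorem LieSubalgebra.coe_lieSpan_eq_span_of_forall_lie_mem {K L : Type*} [CommRing K]
    [LieRing L] [LieAlgebra K L] {s : Set L} (h : ∀ x ∈ s, ∀ y ∈ s, ⁅x, y⁆ ∈ span K s) :
    (lieSpan K L s).toSubmodule = span K s := by
  refine le_antisymm (fun x hx => ?_) submodule_span_le_lieSpan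
  let S : LieSubalgebra K L := { span K s with lie_mem' := lie_mem_span_of_forall_lie_mem h }
  exact (lieSpan_le (K := S)).mpr subset_span hx

theorem mul_pow_eq_smul_of_mul_eq_smul {K R : Type*} [CommSemiring K] [Semiring R] [Algebra K R]
    {a c : R} {r : K} (h : a * c = r • (c * a)) (k : ℕ) : a * c ^ k = r ^ k • (c ^ k * a) := by
  induction k with
  | zero => simp
  | succ k ih =>
    rw [pow_succ, ← mul_assoc, ih, smul_mul_assoc, mul_assoc, h, mul_smul_comm, smul_smul,
      ← mul_assoc, ← pow_succ, ← pow_succ]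

theorem pow_mul_eq_smul_of_mul_eq_smul {K R : Type*} [CommSemiring K] [Semiring R] [Algebra K R]
    {b c : R} {r : K} (h : c * b = r • (b * c)) (k : ℕ) : c ^ k * b = r ^ k • (b * c ^ k) := by
  induction k with
  | zero => simp
  | succ k ih =>
    rw [pow_succ', mul_assoc, ih, mul_smul_comm, ← mul_assoc, h, smul_mul_assoc, smul_smul,
      mul_assoc, ← pow_succ', ← pow_succ]

namespace QOscillator

section CommRing

variable {K R : Type*} [CommRing K] [Ring R] [Algebra K R] {q : K} {A B C : R}

theorem commutator_eq_one_sub_smul (hAB : A * B - q • (B * A) = 1) (hC : A * B - B * A = C) :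
    C = 1 - (1 - q) • (B * A) := by
  rw [← hC, sub_eq_iff_eq_add.mp hAB]; module

theorem mul_commutator_eq_smul (hAB : A * B - q • (B * A) = 1) (hC : A * B - B * A = C) :
    A * C = q • (C * A) := by
  rw [commutator_eq_one_sub_smul hAB hC]
  simp only [mul_sub, sub_mul, mul_smul_comm, smul_mul_assoc, mul_one, one_mul, ← mul_assoc,
    sub_eq_iff_eq_add.mp hAB, add_mul]
  module

theorem commutator_mul_eq_smul (hAB : A * B - q • (B * A) = 1) (hC : A * B - B * A = C) :
    C * B = q • (B * C) := by
  rw [commutator_eq_one_sub_smul hAB hC]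
  simp only [mul_sub, sub_mul, mul_smul_comm, smul_mul_assoc, mul_one, one_mul, mul_assoc,
    sub_eq_iff_eq_add.mp hAB, mul_add]
  module

def commMonomials (A B C : R) : Set R :=
  {x | ∃ m k l : ℕ, 0 < k ∧ x = B ^ m * C ^ k * A ^ l}

variable (K) in
def commIdeal (A B C : R) : Submodule K R :=
  span K (commMonomials A B C)

theorem monomial_mem_commIdeal (m : ℕ) {k : ℕ} (hk : 0 < k) (l : ℕ) :
    B ^ m * C ^ k * A ^ l ∈ commIdeal K A B C :=
  subset_span ⟨m, k, l, hk, rfl⟩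

theorem commIdeal_le {P : Submodule K R}
    (h : ∀ m k l : ℕ, 0 < k → B ^ m * C ^ k * A ^ l ∈ P) : commIdeal K A B C ≤ P :=
  span_le.mpr fun _ ⟨m, k, l, hk, hx⟩ => hx ▸ h m k l hk

theorem B_mul_mem_commIdeal {x : R} (hx : x ∈ commIdeal K A B C) :
    B * x ∈ commIdeal K A B C := by
  refine commIdeal_le (P := (commIdeal K A B C).comap (LinearMap.mulLeft K B)) ?_ hx
  intro m k l hk
  simpa only [mem_comap, LinearMap.mulLeft_apply, ← mul_assoc, ← pow_succ']
    using monomial_mem_commIdeal _ hk l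

theorem mul_A_mem_commIdeal {x : R} (hx : x ∈ commIdeal K A B C) :
    x * A ∈ commIdeal K A B C := by
  refine commIdeal_le (P := (commIdeal K A B C).comap (LinearMap.mulRight K A)) ?_ hx
  intro m k l hk
  simpa only [mem_comap, LinearMap.mulRight_apply, mul_assoc, ← pow_succ]
    using monomial_mem_commIdeal m hk (l + 1)

theorem A_mul_mem_commIdeal (hAB : A * B - q • (B * A) = 1) (hC : A * B - B * A = C) {x : R}
    (hx : x ∈ commIdeal K A B C) : A * x ∈ commIdeal K A B C := by
  refine commIdeal_le (P := (commIdeal K A B C).comap (LinearMap.mulLeft K A)) ?_ hx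
  intro m k l hk
  simp only [mem_comap, LinearMap.mulLeft_apply]
  induction m with
  | zero =>
    have h : q ^ k • (B ^ 0 * C ^ k * A ^ (l + 1)) ∈ commIdeal K A B C :=
      smul_mem _ _ (monomial_mem_commIdeal 0 hk _)
    rw [pow_zero, one_mul, pow_succ', ← mul_assoc, ← smul_mul_assoc,
      ← mul_pow_eq_smul_of_mul_eq_smul (mul_commutator_eq_smul hAB hC), mul_assoc] at h
    rwa [pow_zero, one_mul]
  | succ m ih =>
    rw [pow_succ', mul_assoc B, mul_assoc B, ← mul_assoc A, sub_eq_iff_eq_add.mp hAB, add_mul,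
      one_mul, smul_mul_assoc, mul_assoc B]
    exact add_mem (monomial_mem_commIdeal m hk l) (smul_mem _ q (B_mul_mem_commIdeal ih))

theorem mul_B_mem_commIdeal (hAB : A * B - q • (B * A) = 1) (hC : A * B - B * A = C) {x : R}
    (hx : x ∈ commIdeal K A B C) : x * B ∈ commIdeal K A B C := by
  refine commIdeal_le (P := (commIdeal K A B C).comap (LinearMap.mulRight K B)) ?_ hx
  intro m k l hk
  simp only [mem_comap, LinearMap.mulRight_apply]
  induction l with
  | zero =>
    have h : q ^ k • (B ^ (m + 1) * C ^ k * A ^ 0) ∈ commIdeal K A B C :=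
      smul_mem _ _ (monomial_mem_commIdeal _ hk _)
    rw [pow_zero, mul_one, pow_succ, mul_assoc, ← mul_smul_comm,
      ← pow_mul_eq_smul_of_mul_eq_smul (commutator_mul_eq_smul hAB hC), ← mul_assoc] at h
    rwa [pow_zero, mul_one]
  | succ l ih =>
    rw [pow_succ, ← mul_assoc, mul_assoc _ A B, sub_eq_iff_eq_add.mp hAB, mul_add,
      mul_one, mul_smul_comm, ← mul_assoc]
    exact add_mem (monomial_mem_commIdeal m hk l) (smul_mem _ q (mul_A_mem_commIdeal ih))

theorem mul_mem_commIdeal_left (hAB : A * B - q • (B * A) = 1)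
    (hC : A * B - B * A = C) {x w : R} (hx : x ∈ Algebra.adjoin K {A, B})
    (hw : w ∈ commIdeal K A B C) : x * w ∈ commIdeal K A B C := by
  induction hx using Algebra.adjoin_induction generalizing w with
  | mem x hx =>
    rcases hx with rfl | rfl
    exacts [A_mul_mem_commIdeal hAB hC hw, B_mul_mem_commIdeal hw]
  | algebraMap r => rw [← Algebra.smul_def]; exact smul_mem _ r hw
  | add x y _ _ hx hy => rw [add_mul]; exact add_mem (hx hw) (hy hw)
  | mul x y _ _ hx hy => rw [mul_assoc]; exact hx (hy hw)

theorem mul_mem_commIdeal_right (hAB : A * B - q • (B * A) = 1)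
    (hC : A * B - B * A = C) {x w : R} (hx : x ∈ Algebra.adjoin K {A, B})
    (hw : w ∈ commIdeal K A B C) : w * x ∈ commIdeal K A B C := by
  induction hx using Algebra.adjoin_induction generalizing w with
  | mem x hx =>
    rcases hx with rfl | rfl
    exacts [mul_A_mem_commIdeal hw, mul_B_mem_commIdeal hAB hC hw]
  | algebraMap r => rw [← Algebra.commutes, ← Algebra.smul_def]; exact smul_mem _ r hw
  | add x y _ _ hx hy => rw [mul_add]; exact add_mem (hx hw) (hy hw)
  | mul x y _ _ hx hy => rw [← mul_assoc]; exact hy (hx hw)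

theorem commIdeal_le_adjoin (hC : A * B - B * A = C) :
    commIdeal K A B C ≤ Subalgebra.toSubmodule (Algebra.adjoin K {A, B}) := by
  have hA : A ∈ Algebra.adjoin K {A, B} := Algebra.subset_adjoin (by simp)
  have hB : B ∈ Algebra.adjoin K {A, B} := Algebra.subset_adjoin (by simp)
  have hC' : C ∈ Algebra.adjoin K {A, B} := hC ▸ sub_mem (mul_mem hA hB) (mul_mem hB hA)
  exact commIdeal_le fun m k l _ => (Subalgebra.mem_toSubmodule _).mpr
    (mul_mem (mul_mem (pow_mem hB m) (pow_mem hC' k)) (pow_mem hA l))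

theorem lie_mem_commIdeal (hAB : A * B - q • (B * A) = 1) (hC : A * B - B * A = C) {x y : R}
    (hx : x ∈ {A, B} ∪ commMonomials A B C) (hy : y ∈ {A, B} ∪ commMonomials A B C) :
    ⁅x, y⁆ ∈ commIdeal K A B C := by
  have mem_adjoin : ∀ z ∈ {A, B} ∪ commMonomials A B C, z ∈ Algebra.adjoin K {A, B} := by
    rintro z (hz | hz)
    · exact Algebra.subset_adjoin hz
    · exact commIdeal_le_adjoin hC (subset_span hz)
  rw [Ring.lie_def]
  rcases hx with hx | hx
  · rcases hy with hy | hy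
    · have hCmem : C ∈ commIdeal K A B C := by
        simpa using monomial_mem_commIdeal (K := K) (A := A) (B := B) (C := C) 0 one_pos 0
      rcases hx with rfl | rfl <;> rcases hy with rfl | rfl
      · simp
      · rwa [hC]
      · rw [← neg_sub, hC]; exact neg_mem hCmem
      · simp
    · have hx := mem_adjoin x (.inl hx)
      exact sub_mem (mul_mem_commIdeal_left hAB hC hx (subset_span hy))
        (mul_mem_commIdeal_right hAB hC hx (subset_span hy))
  · have hy := mem_adjoin y hy
    exact sub_mem (mul_mem_commIdeal_right hAB hC hy (subset_span hx))
      (mul_mem_commIdeal_left hAB hC hy (subset_span hx))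

theorem smul_pow_commutator_mul_B_mul_A (hAB : A * B - q • (B * A) = 1) (hC : A * B - B * A = C)
    (k : ℕ) : (1 - q) • (C ^ k * B * A) = C ^ k - C ^ (k + 1) := by
  have h : (1 - q) • (B * A) = 1 - C := by rw [commutator_eq_one_sub_smul hAB hC, sub_sub_cancel]
  rw [mul_assoc, ← mul_smul_comm, h, mul_sub, mul_one, pow_succ]

theorem smul_B_mul_pow_commutator_mul_A (hAB : A * B - q • (B * A) = 1) (hC : A * B - B * A = C)
    (k : ℕ) : ((1 - q) * q ^ k) • (B * C ^ k * A) = C ^ k - C ^ (k + 1) := by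
  rw [mul_smul, ← smul_mul_assoc,
    ← pow_mul_eq_smul_of_mul_eq_smul (commutator_mul_eq_smul hAB hC),
    smul_pow_commutator_mul_B_mul_A hAB hC]

theorem lie_pow_commutator_mul_pow_A (hAB : A * B - q • (B * A) = 1) (hC : A * B - B * A = C)
    (k l : ℕ) : ⁅C ^ k * A ^ l, A⁆ = (1 - q ^ k) • (C ^ k * A ^ (l + 1)) := by
  rw [Ring.lie_def, ← mul_assoc, mul_pow_eq_smul_of_mul_eq_smul (mul_commutator_eq_smul hAB hC),
    smul_mul_assoc, mul_assoc, mul_assoc, ← pow_succ, ← pow_succ', sub_smul, one_smul]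

theorem lie_B_pow_mul_pow_commutator (hAB : A * B - q • (B * A) = 1) (hC : A * B - B * A = C)
    (m k : ℕ) : ⁅B, B ^ m * C ^ k⁆ = (1 - q ^ k) • (B ^ (m + 1) * C ^ k) := by
  rw [Ring.lie_def, mul_assoc, pow_mul_eq_smul_of_mul_eq_smul (commutator_mul_eq_smul hAB hC),
    mul_smul_comm, ← mul_assoc, ← mul_assoc, ← pow_succ, ← pow_succ', sub_smul, one_smul]

theorem smul_lie_pow_commutator_mul_A (hAB : A * B - q • (B * A) = 1) (hC : A * B - B * A = C)
    (k : ℕ) : ((1 - q) * q ^ k) • ⁅C ^ k * A, B⁆ =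
      ((1 - q) * q ^ k - (1 - q ^ (k + 1))) • C ^ k + (1 - q ^ (k + 1)) • C ^ (k + 1) := by
  have h : C ^ k * A * B = C ^ k + q • (C ^ k * B * A) := by
    rw [mul_assoc, sub_eq_iff_eq_add.mp hAB, mul_add, mul_one, mul_smul_comm, mul_assoc]
  rw [Ring.lie_def, h, ← mul_assoc]
  linear_combination (norm := module) q ^ (k + 1) • smul_pow_commutator_mul_B_mul_A hAB hC k -
    smul_B_mul_pow_commutator_mul_A hAB hC k

end CommRing

section Field

variable {K R : Type*} [Field K] [Ring R] [Algebra K R] {q : K} {A B C : R}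

theorem monomial_mem_of_forall_pow_commutator_mem (hAB : A * B - q • (B * A) = 1)
    (hC : A * B - B * A = C) (hq0 : q ≠ 0) (hq1 : q ≠ 1) {P : Submodule K R}
    (hCA : ∀ k l : ℕ, 0 < k → C ^ k * A ^ l ∈ P) (hBC : ∀ m k : ℕ, 0 < k → B ^ m * C ^ k ∈ P)
    (m : ℕ) {k : ℕ} (hk : 0 < k) (l : ℕ) : B ^ m * C ^ k * A ^ l ∈ P := by
  induction m generalizing k l with
  | zero => simpa using hCA k l hk
  | succ m ih =>
    cases l with
    | zero => simpa using hBC (m + 1) k hk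
    | succ l =>
      have h : ((1 - q) * q ^ k) • (B ^ (m + 1) * C ^ k * A ^ (l + 1)) =
          B ^ m * C ^ k * A ^ l - B ^ m * C ^ (k + 1) * A ^ l := by
        have e : B ^ (m + 1) * C ^ k * A ^ (l + 1) = B ^ m * (B * C ^ k * A) * A ^ l := by
          rw [pow_succ B, pow_succ' A]; simp only [mul_assoc]
        rw [e, ← smul_mul_assoc, ← mul_smul_comm, smul_B_mul_pow_commutator_mul_A hAB hC,
          mul_sub, sub_mul]
      have hne : (1 - q) * q ^ k ≠ 0 := mul_ne_zero (sub_ne_zero.mpr hq1.symm) (pow_ne_zero k hq0)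
      rw [← P.smul_mem_iff hne, h]
      exact sub_mem (ih hk l) (ih k.succ_pos l)

variable {L : LieSubalgebra K R}

theorem pow_commutator_mem (hAB : A * B - q • (B * A) = 1) (hC : A * B - B * A = C)
    (hq : ∀ k : ℕ, 0 < k → q ^ k ≠ 1) (hA : A ∈ L) (hB : B ∈ L) {k : ℕ} (hk : 0 < k) :
    C ^ k ∈ L := by
  induction k, hk using Nat.le_induction with
  | base => rw [pow_one, ← hC, ← Ring.lie_def]; exact L.lie_mem hA hB
  | succ k hk ih =>
    have hCA : C ^ k * A ∈ L := by
      have h := L.lie_mem (show C ^ k * A ^ 0 ∈ L by simpa using ih) hA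
      rw [lie_pow_commutator_mul_pow_A hAB hC, zero_add, pow_one] at h
      exact (L.toSubmodule.smul_mem_iff (sub_ne_zero.mpr (hq k hk).symm)).mp h
    have h : (1 - q ^ (k + 1)) • C ^ (k + 1) ∈ L := by
      rw [← add_sub_cancel_left (((1 - q) * q ^ k - (1 - q ^ (k + 1))) • C ^ k)
        ((1 - q ^ (k + 1)) • C ^ (k + 1)), ← smul_lie_pow_commutator_mul_A hAB hC]
      exact sub_mem (L.smul_mem _ (L.lie_mem hCA hB)) (L.smul_mem _ ih)
    exact (L.toSubmodule.smul_mem_iff (sub_ne_zero.mpr (hq (k + 1) k.succ_pos).symm)).mp h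

theorem pow_commutator_mul_pow_mem (hAB : A * B - q • (B * A) = 1) (hC : A * B - B * A = C)
    (hq : ∀ k : ℕ, 0 < k → q ^ k ≠ 1) (hA : A ∈ L) (hB : B ∈ L) {k : ℕ} (hk : 0 < k)
    (l : ℕ) : C ^ k * A ^ l ∈ L := by
  induction l with
  | zero => simpa using pow_commutator_mem hAB hC hq hA hB hk
  | succ l ih =>
    have h := L.lie_mem ih hA
    rw [lie_pow_commutator_mul_pow_A hAB hC] at h
    exact (L.toSubmodule.smul_mem_iff (sub_ne_zero.mpr (hq k hk).symm)).mp h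

theorem pow_mul_pow_commutator_mem (hAB : A * B - q • (B * A) = 1) (hC : A * B - B * A = C)
    (hq : ∀ k : ℕ, 0 < k → q ^ k ≠ 1) (hA : A ∈ L) (hB : B ∈ L) (m : ℕ) {k : ℕ}
    (hk : 0 < k) : B ^ m * C ^ k ∈ L := by
  induction m with
  | zero => simpa using pow_commutator_mem hAB hC hq hA hB hk
  | succ m ih =>
    have h := L.lie_mem hB ih
    rw [lie_B_pow_mul_pow_commutator hAB hC] at h
    exact (L.toSubmodule.smul_mem_iff (sub_ne_zero.mpr (hq k hk).symm)).mp h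

theorem coe_lieSpan_eq_span (hAB : A * B - q • (B * A) = 1) (hC : A * B - B * A = C)
    (hq0 : q ≠ 0) (hq : ∀ k : ℕ, 0 < k → q ^ k ≠ 1) :
    (LieSubalgebra.lieSpan K R {A, B}).toSubmodule =
      span K ({A, B} ∪ {T : R | ∃ k l : ℕ, 0 < k ∧ 0 < l ∧
        (T = C ^ k ∨ T = C ^ k * A ^ l ∨ T = B ^ l * C ^ k)}) := by
  set S := {T : R | ∃ k l : ℕ, 0 < k ∧ 0 < l ∧
    (T = C ^ k ∨ T = C ^ k * A ^ l ∨ T = B ^ l * C ^ k)}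
  have hA : A ∈ LieSubalgebra.lieSpan K R {A, B} := LieSubalgebra.subset_lieSpan (by simp)
  have hB : B ∈ LieSubalgebra.lieSpan K R {A, B} := LieSubalgebra.subset_lieSpan (by simp)
  have hS : span K ({A, B} ∪ commMonomials A B C) ≤ span K ({A, B} ∪ S) := by
    refine span_le.mpr (Set.union_subset (Set.subset_union_left.trans subset_span) ?_)
    rintro _ ⟨m, k, l, hk, rfl⟩
    refine monomial_mem_of_forall_pow_commutator_mem hAB hC hq0 (by simpa using hq 1 one_pos)
      ?_ ?_ m hk l
    · intro k l hk
      rcases l.eq_zero_or_pos with rfl | hl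
      · rw [pow_zero, mul_one]; exact subset_span (.inr ⟨k, 1, hk, one_pos, .inl rfl⟩)
      · exact subset_span (.inr ⟨k, l, hk, hl, .inr (.inl rfl)⟩)
    · intro m k hk
      rcases m.eq_zero_or_pos with rfl | hm
      · rw [pow_zero, one_mul]; exact subset_span (.inr ⟨k, 1, hk, one_pos, .inl rfl⟩)
      · exact subset_span (.inr ⟨k, m, hk, hm, .inr (.inr rfl)⟩)
  apply le_antisymm
  · calc (LieSubalgebra.lieSpan K R {A, B}).toSubmodule
        ≤ (LieSubalgebra.lieSpan K R ({A, B} ∪ commMonomials A B C)).toSubmodule :=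
          fun _ hx => LieSubalgebra.lieSpan_mono Set.subset_union_left hx
      _ = span K ({A, B} ∪ commMonomials A B C) :=
          LieSubalgebra.coe_lieSpan_eq_span_of_forall_lie_mem fun x hx y hy =>
            span_mono Set.subset_union_right (lie_mem_commIdeal hAB hC hx hy)
      _ ≤ span K ({A, B} ∪ S) := hS
  · refine span_le.mpr ?_
    rintro _ ((rfl | rfl) | ⟨k, l, hk, hl, rfl | rfl | rfl⟩)
    · exact hA
    · exact hB
    · exact pow_commutator_mem hAB hC hq hA hB hk
    · exact pow_commutator_mul_pow_mem hAB hC hq hA hB hk l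
    · exact pow_mul_pow_commutator_mem hAB hC hq hA hB l hk

end Field

end QOscillator

theorem dense_span_range_Phi : Dense (span ℂ (Set.range Phi) : Set H2) := by
  let b : HilbertBasis ℕ ℂ H2 := ⟨LinearIsometryEquiv.refl ℂ H2⟩
  have hb : ⇑b = Phi := funext fun n => by rw [← b.repr_symm_single]; rfl
  rw [dense_iff_topologicalClosure_eq_top, ← hb]
  exact b.dense_span

theorem mul_sub_smul_mul_eq_one {q : ℝ} (hq0 : 0 ≤ q) (hq1 : q < 1) {A B : H2 →L[ℂ] H2}
    (hB : ∀ n : ℕ, B (Phi n) = (Real.sqrt ((1 - q ^ (n + 1)) / (1 - q)) : ℂ) • Phi (n + 1))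
    (hA0 : A (Phi 0) = 0)
    (hA : ∀ n : ℕ, A (Phi (n + 1)) = (Real.sqrt ((1 - q ^ (n + 1)) / (1 - q)) : ℂ) • Phi n) :
    A * B - (q : ℂ) • (B * A) = 1 := by
  have hsq : ∀ n : ℕ, (Real.sqrt ((1 - q ^ (n + 1)) / (1 - q)) : ℂ) *
      Real.sqrt ((1 - q ^ (n + 1)) / (1 - q)) = (1 - q ^ (n + 1)) / (1 - q) := fun n => by
    rw [← Complex.ofReal_mul, Real.mul_self_sqrt]
    · push_cast; rfl
    · exact div_nonneg (sub_nonneg.mpr (pow_le_one₀ hq0 hq1.le)) (sub_nonneg.mpr hq1.le)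
  have hq : (1 : ℂ) - q ≠ 0 := by exact_mod_cast (sub_pos.mpr hq1).ne'
  refine ContinuousLinearMap.ext_on dense_span_range_Phi ?_
  rintro _ ⟨n, rfl⟩
  cases n with
  | zero =>
    simp only [sub_apply, smul_apply, mul_apply_eq_comp, one_apply_eq_self, hB, hA0, hA,
      map_smul, map_zero, smul_zero, sub_zero, smul_smul, hsq]
    rw [pow_one, div_self hq, one_smul]
  | succ n =>
    simp only [sub_apply, smul_apply, mul_apply_eq_comp, one_apply_eq_self, hB, hA, map_smul,
      smul_smul, hsq, ← sub_smul]
    conv_rhs => rw [← one_smul ℂ (Phi (n + 1))]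
    congr 1
    field_simp
    ring

/-- The Lie subalgebra of the bounded operators on `H` generated by `{A, B}` (the
smallest complex subspace containing `A, B` and closed under the commutator bracket,
i.e. the Lie polynomials in `A, B`) equals the linear span of
`{A, B} ∪ {[A,B]^k, [A,B]^k A^l, B^l [A,B]^k : k, l ≥ 1}`. -/
theorem stmt_17 (q : ℝ) (hq0 : 0 < q) (hq1 : q < 1)
    (A B : H2 →L[ℂ] H2)
    (hB : ∀ n : ℕ, B (Phi n) = (Real.sqrt ((1 - q ^ (n + 1)) / (1 - q)) : ℂ) • Phi (n + 1))
    (hA0 : A (Phi 0) = 0)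
    (hA : ∀ n : ℕ, A (Phi (n + 1)) = (Real.sqrt ((1 - q ^ (n + 1)) / (1 - q)) : ℂ) • Phi n) :
    (LieSubalgebra.lieSpan ℂ (H2 →L[ℂ] H2) {A, B}).toSubmodule =
      Submodule.span ℂ ({A, B} ∪ {T : H2 →L[ℂ] H2 | ∃ k l : ℕ, 0 < k ∧ 0 < l ∧
        (T = (A * B - B * A) ^ k ∨ T = (A * B - B * A) ^ k * A ^ l ∨
          T = B ^ l * (A * B - B * A) ^ k)}) := by
  have hq : ∀ k : ℕ, 0 < k → (q : ℂ) ^ k ≠ 1 := fun k hk => by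
    exact_mod_cast (pow_lt_one₀ hq0.le hq1 hk.ne').ne
  exact QOscillator.coe_lieSpan_eq_span (mul_sub_smul_mul_eq_one hq0.le hq1 hB hA0 hA) rfl
    (by exact_mod_cast hq0.ne') hq

end
end
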